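/- arXiv:math/0411292 — 13 statements merged into one kernel-verified Lean document; each statement's English description precedes it below -/
import Mathlib

section
/- If g : S¹ → S¹ is a continuous map homotopic to the angle-doubling map d(θ) = 2θ, then there exists a continuous surjective map α : S¹ → S¹ of degree one such that α ∘ g = d ∘ α. -/
/-!
Let `F` be the lift of `g`. Its displacement `F x - 2x` is periodic, hence bounded, so
`h = lim F^[n] / 2^n = id + ∑ (F - 2 id) ∘ F^[n] / 2^(n+1)` converges uniformly. Then
`h ∘ F = 2h` and `h (x + 1) = h x + 1`, so `h` descends to a degree-one circle map `α` with
`α ∘ g = 2α`, which is surjective by the intermediate value theorem.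
-/

open Function Set

theorem Function.Periodic.continuous_lift {α X : Type*} [AddCommGroup α] [TopologicalSpace α]
    [TopologicalSpace X] {f : α → X} {c : α} (hp : Periodic f c) (hf : Continuous f) :
    Continuous hp.lift :=
  continuous_coinduced_dom.mpr hf

theorem Function.Periodic.surjective_lift {α X : Type*} [AddGroup α] {f : α → X} {c : α}
    (hp : Periodic f c) (hf : Surjective f) : Surjective hp.lift := fun y ↦
  (hf y).elim fun x hx ↦ ⟨x, hx⟩

theorem Continuous.surjective_of_map_add_one {h : ℝ → ℝ} (hc : Continuous h)
    (h1 : ∀ x, h (x + 1) = h x + 1) : Surjective h := by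
  have hadd_int : ∀ (x : ℝ) (k : ℤ), h (x + k) = h x + k := by
    have hp : Periodic (fun x ↦ h x - x) 1 := fun x ↦ by simp only [h1]; ring
    intro x k
    have := hp.int_mul k x
    simp only [mul_one] at this
    linarith
  intro y
  set k := ⌊y - h 0⌋
  have hy : y - k ∈ Icc (h 0) (h 1) := by
    rw [show h 1 = h 0 + 1 by simpa using h1 0]
    constructor <;> linarith [Int.floor_le (y - h 0), Int.lt_floor_add_one (y - h 0)]
  obtain ⟨x, -, hx⟩ := intermediate_value_Icc zero_le_one hc.continuousOn hy
  exact ⟨x + k, by rw [hadd_int, hx]; ring⟩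

namespace CircleLift

variable {F : ℝ → ℝ} {d : ℕ}

def displacement (F : ℝ → ℝ) (d : ℕ) (x : ℝ) : ℝ := F x - d * x

theorem continuous_displacement (hc : Continuous F) : Continuous (displacement F d) :=
  hc.sub (continuous_const.mul continuous_id)

theorem periodic_displacement (hF : ∀ x, F (x + 1) = F x + d) : Periodic (displacement F d) 1 :=
  fun x ↦ by simp only [displacement, hF]; ring

theorem map_add_intCast (hF : ∀ x, F (x + 1) = F x + d) (x : ℝ) (k : ℤ) :
    F (x + k) = F x + d * k := by
  have := (periodic_displacement hF).int_mul k x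
  simp only [displacement, mul_one] at this
  linarith

theorem iterate_map_add_one (hF : ∀ x, F (x + 1) = F x + d) (n : ℕ) (x : ℝ) :
    F^[n] (x + 1) = F^[n] x + (d : ℝ) ^ n := by
  induction n with
  | zero => simp
  | succ n ih =>
    rw [iterate_succ_apply', iterate_succ_apply', ih]
    have := map_add_intCast hF (F^[n] x) ((d ^ n : ℕ) : ℤ)
    push_cast at this
    rw [this, pow_succ]
    ring

noncomputable def semiconjLift (F : ℝ → ℝ) (d : ℕ) (x : ℝ) : ℝ :=
  x + ∑' n : ℕ, displacement F d (F^[n] x) / (d : ℝ) ^ (n + 1)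

theorem semiconjLift_add_one (hF : ∀ x, F (x + 1) = F x + d) (x : ℝ) :
    semiconjLift F d (x + 1) = semiconjLift F d x + 1 := by
  have hterm : ∀ n : ℕ, displacement F d (F^[n] (x + 1)) = displacement F d (F^[n] x) := by
    intro n
    rw [iterate_map_add_one hF]
    simpa using (periodic_displacement hF).nat_mul (d ^ n) (F^[n] x)
  simp only [semiconjLift, hterm]
  ring

theorem exists_summable_bound_displacement_iterate (hc : Continuous F)
    (hF : ∀ x, F (x + 1) = F x + d) (hd : 1 < d) :
    ∃ u : ℕ → ℝ, Summable u ∧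
      ∀ n x, ‖displacement F d (F^[n] x) / (d : ℝ) ^ (n + 1)‖ ≤ u n := by
  obtain ⟨C, hC⟩ := isBounded_iff_forall_norm_le.mp <|
    (periodic_displacement hF).isBounded_of_continuous one_ne_zero (continuous_displacement hc)
  have hd0 : (0 : ℝ) < d := by exact_mod_cast zero_lt_one.trans hd
  refine ⟨fun n ↦ C / d ^ (n + 1), ?_, fun n x ↦ ?_⟩
  · have hgeom := (summable_geometric_of_lt_one (r := 1 / d) (by positivity)
      ((div_lt_one hd0).mpr (by exact_mod_cast hd))).mul_left (C / d)
    refine hgeom.congr fun n ↦ ?_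
    rw [one_div_pow, pow_succ', div_mul_div_comm, mul_one]
  · rw [norm_div, norm_pow, Real.norm_natCast]
    dsimp only
    gcongr
    exact hC _ (mem_range_self _)

theorem continuous_semiconjLift (hc : Continuous F) (hF : ∀ x, F (x + 1) = F x + d)
    (hd : 1 < d) : Continuous (semiconjLift F d) := by
  obtain ⟨u, hu, hbound⟩ := exists_summable_bound_displacement_iterate hc hF hd
  exact continuous_id.add <| continuous_tsum
    (fun n ↦ ((continuous_displacement hc).comp (hc.iterate n)).div_const _) hu hbound

theorem semiconjLift_map (hc : Continuous F) (hF : ∀ x, F (x + 1) = F x + d)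
    (hd : 1 < d) (x : ℝ) : semiconjLift F d (F x) = d * semiconjLift F d x := by
  obtain ⟨u, hu, hbound⟩ := exists_summable_bound_displacement_iterate hc hF hd
  have hd0 : (d : ℝ) ≠ 0 := by positivity
  rw [semiconjLift, semiconjLift,
    (hu.of_norm_bounded (hbound · x)).tsum_eq_zero_add]
  simp only [iterate_succ_apply, pow_succ _ (_ + 1), ← div_div, tsum_div_const]
  simp only [displacement, iterate_zero_apply, zero_add, pow_one]
  field_simp
  ring

end CircleLift

open CircleLift

theorem stmt0_general
    (g : AddCircle (1 : ℝ) → AddCircle (1 : ℝ))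
    (g' : ℝ → ℝ) (hg' : Continuous g')
    (hlift : ∀ x : ℝ, g (x : AddCircle (1 : ℝ)) = ((g' x : ℝ) : AddCircle (1 : ℝ)))
    (hdeg : ∀ x : ℝ, g' (x + 1) = g' x + 2) :
    ∃ α : AddCircle (1 : ℝ) → AddCircle (1 : ℝ),
      Continuous α ∧ Function.Surjective α ∧
      (∃ α' : ℝ → ℝ, Continuous α' ∧ (∀ x : ℝ, α' (x + 1) = α' x + 1) ∧
        ∀ x : ℝ, α (x : AddCircle (1 : ℝ)) = ((α' x : ℝ) : AddCircle (1 : ℝ))) ∧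
      (∀ θ : AddCircle (1 : ℝ), α (g θ) = α θ + α θ) := by
  have hdeg2 : ∀ x, g' (x + 1) = g' x + (2 : ℕ) := by exact_mod_cast hdeg
  set h := semiconjLift g' 2
  have hc : Continuous h := continuous_semiconjLift hg' hdeg2 one_lt_two
  have h1 : ∀ x, h (x + 1) = h x + 1 := semiconjLift_add_one hdeg2
  have hmap : ∀ x, h (g' x) = 2 * h x := by
    simpa using semiconjLift_map hg' hdeg2 one_lt_two
  have hp : Periodic (fun x ↦ (h x : AddCircle (1 : ℝ))) 1 := fun x ↦ by
    simp only [h1, AddCircle.coe_add, AddCircle.coe_period, add_zero]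
  refine ⟨hp.lift, hp.continuous_lift (continuous_quotient_mk'.comp hc),
    hp.surjective_lift (QuotientAddGroup.mk_surjective.comp (hc.surjective_of_map_add_one h1)),
    ⟨h, hc, h1, fun _ ↦ rfl⟩, ?_⟩
  rintro ⟨x⟩
  change hp.lift (g x) = hp.lift x + hp.lift x
  rw [hlift, hp.lift_coe, hp.lift_coe, hmap, two_mul, AddCircle.coe_add]

/-- **Semiconjugacy to angle doubling** (Franks).  If `g` is a continuous map of the
circle `ℝ/ℤ` homotopic to the angle-doubling map `d θ = 2θ` (equivalently, `g` has a
continuous lift `g'` with `g' (x+1) = g' x + 2`), then there is a continuous surjective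
degree-one map `α` with `α ∘ g = d ∘ α`. -/
theorem stmt0
    (g : AddCircle (1 : ℝ) → AddCircle (1 : ℝ)) (hg : Continuous g)
    (g' : ℝ → ℝ) (hg' : Continuous g')
    (hlift : ∀ x : ℝ, g (x : AddCircle (1 : ℝ)) = ((g' x : ℝ) : AddCircle (1 : ℝ)))
    (hdeg : ∀ x : ℝ, g' (x + 1) = g' x + 2) :
    ∃ α : AddCircle (1 : ℝ) → AddCircle (1 : ℝ),
      Continuous α ∧ Function.Surjective α ∧
      (∃ α' : ℝ → ℝ, Continuous α' ∧ (∀ x : ℝ, α' (x + 1) = α' x + 1) ∧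
        ∀ x : ℝ, α (x : AddCircle (1 : ℝ)) = ((α' x : ℝ) : AddCircle (1 : ℝ))) ∧
      (∀ θ : AddCircle (1 : ℝ), α (g θ) = α θ + α θ) :=
  stmt0_general g g' hg' hlift hdeg
end

section
/- Let g̃ : ℝ → ℝ be a lift of a continuous degree-two circle map, and let B₁ be the space of lifts of continuous degree-one circle maps (continuous f : ℝ → ℝ with f(x+1) = f(x)+1) equipped with the sup metric on f - id. Then the operator F(f) = (f ∘ g̃)/2 maps B₁ to B₁ and is a contraction with contraction constant 1/2; in particular F has a unique fixed point α̃ satisfying α̃ ∘ g̃ = 2·α̃. -/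
/-!
Writing a degree-one lift as `a = id + φ` with `φ` continuous and 1-periodic, the equation
`a ∘ g̃ = 2 a` becomes the fixed-point equation `φ = (g̃ - 2 id)/2 + (φ ∘ g̃)/2`. Since `g̃ - 2 id`
is 1-periodic, the right-hand side is a `1/2`-contraction of the complete space of bounded
continuous functions preserving the closed subset of 1-periodic ones, so Banach's theorem gives
`α̃`. Uniqueness needs no completeness: two solutions differ by a bounded function `δ` with
`δ = (δ ∘ g̃)/2`, whence `sup |δ| ≤ sup |δ| / 2`.
-/

open Function Set BoundedContinuousFunction
open scoped NNReal

theorem Function.periodic_sub_of_add_eq {α β : Type*} [Add α] [AddCommGroup β] {f g : α → β}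
    {c : α} {d : β} (hf : ∀ x, f (x + c) = f x + d) (hg : ∀ x, g (x + c) = g x + d) :
    Periodic (f - g) c := fun x => by
  simp only [Pi.sub_apply, hf, hg, add_sub_add_right_eq_sub]

theorem Function.Periodic.comp_of_add_eq_add_nat {β : Type*} {φ : ℝ → β} {g : ℝ → ℝ} {n : ℕ}
    (hφ : Periodic φ 1) (hg : ∀ x, g (x + 1) = g x + n) : Periodic (φ ∘ g) 1 := fun x => by
  simpa [hg] using (hφ.nat_mul n) (g x)

theorem Function.Periodic.bddAbove_range_abs {u : ℝ → ℝ} {c : ℝ} (hp : Periodic u c)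
    (hc : c ≠ 0) (hu : Continuous u) : BddAbove (range fun y => |u y|) :=
  ((hp.comp abs).isBounded_of_continuous hc (continuous_abs.comp hu)).bddAbove

theorem bddAbove_range_abs_sub_of_add_eq {f₁ f₂ : ℝ → ℝ} {c d : ℝ} (hc : c ≠ 0)
    (hf₁ : Continuous f₁) (hf₂ : Continuous f₂) (h₁ : ∀ x, f₁ (x + c) = f₁ x + d)
    (h₂ : ∀ x, f₂ (x + c) = f₂ x + d) : BddAbove (range fun y => |f₁ y - f₂ y|) :=
  (periodic_sub_of_add_eq h₁ h₂).bddAbove_range_abs hc (hf₁.sub hf₂)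

theorem abs_div_two_sub_div_two_le_half_iSup {f₁ f₂ : ℝ → ℝ}
    (hbdd : BddAbove (range fun y => |f₁ y - f₂ y|)) (y : ℝ) :
    |f₁ y / 2 - f₂ y / 2| ≤ 1 / 2 * ⨆ y, |f₁ y - f₂ y| := by
  rw [← sub_div, abs_div, abs_two]
  linarith [le_ciSup hbdd y]

theorem eq_of_forall_abs_sub_le_half_iSup {a b : ℝ → ℝ}
    (h : ∀ x, |a x - b x| ≤ 1 / 2 * ⨆ y, |a y - b y|) : a = b := by
  have hsup : (⨆ y, |a y - b y|) ≤ 0 := by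
    linarith [ciSup_le h]
  funext x
  have := h x
  rw [← sub_eq_zero, ← abs_nonpos_iff]
  linarith

theorem BoundedContinuousFunction.isClosed_setOf_periodic {β : Type*} [MetricSpace β] (c : ℝ) :
    IsClosed {φ : ℝ →ᵇ β | Periodic φ c} := by
  simp only [Periodic, ofPred_forall]
  exact isClosed_iInter fun x => isClosed_eq (continuous_eval_const _) (continuous_eval_const _)

theorem BoundedContinuousFunction.contractingWith_const_add_smul_compContinuous
    {α β : Type*} [TopologicalSpace α] [NormedAddCommGroup β] [NormedSpace ℝ β] {K : ℝ≥0}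
    (hK : K < 1) (u : α →ᵇ β) (g : C(α, α)) :
    ContractingWith K fun φ : α →ᵇ β => u + (K : ℝ) • φ.compContinuous g := by
  refine ⟨hK, LipschitzWith.of_dist_le_mul fun φ ψ => ?_⟩
  rw [dist_add_left, dist_smul₀, Real.norm_of_nonneg K.coe_nonneg]
  gcongr
  simpa using (lipschitz_compContinuous g).dist_le_mul φ ψ

theorem exists_periodic_eq_add_mul_comp {g : ℝ → ℝ} (hg : Continuous g) {n : ℕ}
    (hdeg : ∀ x, g (x + 1) = g x + n) (u : ℝ →ᵇ ℝ) (hu : Periodic u 1) {K : ℝ≥0} (hK : K < 1) :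
    ∃ φ : ℝ →ᵇ ℝ, Periodic φ 1 ∧ ∀ x, φ x = u x + K * φ (g x) := by
  have hT := contractingWith_const_add_smul_compContinuous hK u ⟨g, hg⟩
  have hmaps : MapsTo (fun φ : ℝ →ᵇ ℝ => u + (K : ℝ) • φ.compContinuous ⟨g, hg⟩)
      {φ | Periodic φ 1} {φ | Periodic φ 1} := fun φ hφ x => by
    simp [hu x, show φ (g (x + 1)) = φ (g x) from hφ.comp_of_add_eq_add_nat hdeg x]
  obtain ⟨φ, hφ, hfix, -⟩ := (hT.restrict hmaps).exists_fixedPoint'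
    (isClosed_setOf_periodic 1).isComplete hmaps (x := 0) (fun _ => rfl) (edist_ne_top _ _)
  exact ⟨φ, hφ, fun x => by simpa using (DFunLike.congr_fun hfix x).symm⟩

theorem exists_lift_comp_eq_two_mul {g : ℝ → ℝ} (hg : Continuous g)
    (hdeg : ∀ x, g (x + 1) = g x + 2) :
    ∃ a : ℝ → ℝ, (Continuous a ∧ ∀ x, a (x + 1) = a x + 1) ∧ ∀ x, a (g x) = 2 * a x := by
  have hper : Periodic (fun x => (g x - 2 * x) / 2) 1 := fun x =>
    show (g (x + 1) - 2 * (x + 1)) / 2 = (g x - 2 * x) / 2 by rw [hdeg]; ring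
  obtain ⟨C, hC⟩ := Metric.isBounded_range_iff.1 (hper.isBounded_of_continuous one_ne_zero
    (by fun_prop))
  obtain ⟨φ, hφ, hfix⟩ := exists_periodic_eq_add_mul_comp hg (n := 2) (by simpa using hdeg)
    (mkOfBound ⟨fun x => (g x - 2 * x) / 2, by fun_prop⟩ C hC) hper (K := 1 / 2) (by norm_num)
  refine ⟨fun x => x + φ x, ⟨by fun_prop, fun x => ?_⟩, fun x => ?_⟩
  · show x + 1 + φ (x + 1) = x + φ x + 1
    rw [hφ x]
    ring
  · show g x + φ (g x) = 2 * (x + φ x)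
    have := hfix x
    simp only [mkOfBound_coe, ContinuousMap.coe_mk, NNReal.coe_div, NNReal.coe_one,
      NNReal.coe_ofNat] at this
    linarith

/-- The operator `F f = (f ∘ g̃)/2` preserves the space `B₁` of lifts of degree-one
circle maps, is a `1/2`-contraction for the sup metric on `B₁`, and hence has a unique
fixed point `α̃` in `B₁`, which satisfies `α̃ ∘ g̃ = 2 α̃`. -/
theorem stmt1
    (g' : ℝ → ℝ) (hg' : Continuous g') (hdeg : ∀ x : ℝ, g' (x + 1) = g' x + 2)
    (B1 : Set (ℝ → ℝ)) (hB1 : B1 = {f | Continuous f ∧ ∀ x : ℝ, f (x + 1) = f x + 1})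
    (F : (ℝ → ℝ) → (ℝ → ℝ)) (hF : F = fun f x => f (g' x) / 2) :
    (∀ f ∈ B1, F f ∈ B1) ∧
    (∀ f₁ ∈ B1, ∀ f₂ ∈ B1, ∀ x : ℝ,
      |F f₁ x - F f₂ x| ≤ (1 / 2) * ⨆ y : ℝ, |f₁ y - f₂ y|) ∧
    (∃! a : ℝ → ℝ, a ∈ B1 ∧ ∀ x : ℝ, a (g' x) = 2 * a x) := by
  subst hB1 hF
  refine ⟨fun f ⟨hfc, hf⟩ => ⟨(hfc.comp hg').div_const 2, fun x => ?_⟩,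
    fun f₁ ⟨hc₁, h₁⟩ f₂ ⟨hc₂, h₂⟩ x => abs_div_two_sub_div_two_le_half_iSup
      (bddAbove_range_abs_sub_of_add_eq one_ne_zero hc₁ hc₂ h₁ h₂) (g' x), ?_⟩
  · simp only [hdeg, ← one_add_one_eq_two, ← add_assoc, hf]
    ring
  obtain ⟨a, ha, hag⟩ := exists_lift_comp_eq_two_mul hg' hdeg
  refine ⟨a, ⟨ha, hag⟩, fun b ⟨hb, hbg⟩ => eq_of_forall_abs_sub_le_half_iSup fun x => ?_⟩
  have hx := abs_div_two_sub_div_two_le_half_iSup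
    (bddAbove_range_abs_sub_of_add_eq one_ne_zero hb.1 ha.1 hb.2 ha.2) (g' x)
  rwa [hbg, hag, mul_div_cancel_left₀ _ two_ne_zero, mul_div_cancel_left₀ _ two_ne_zero] at hx
end

section
/- Let g̃ = 2·id + φ be a lift of a continuous degree-two circle map, where φ : ℝ → ℝ is continuous and 1-periodic. Then the unique lift α̃ of the degree-one semiconjugacy satisfying α̃ ∘ g̃ = 2·α̃ is given by α̃(x) = x + Σ_{i=0}^{∞} φ(g̃^i(x))/2^{i+1}, with the series converging uniformly. -/
/-!
Put `h := α̃ - id`, which is continuous and 1-periodic, hence bounded. Unrolling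
`g̃ y = 2 y + φ y` gives `x + ∑_{i<n} φ(g̃^i x)/2^{i+1} = g̃^n x / 2^n`, while the semiconjugacy
gives `α̃ x = α̃(g̃^n x) / 2^n`. So the `n`-th partial sum differs from `α̃ x` by
`h(g̃^n x) / 2^n`, which tends to `0` uniformly in `x`.
-/

open Filter

lemma iterate_div_pow_eq_add_sum {K : Type*} [Field K] {c : K} (hc : c ≠ 0) (φ : K → K)
    (n : ℕ) (x : K) :
    (fun y => c * y + φ y)^[n] x / c ^ n =
      x + ∑ i ∈ Finset.range n, φ ((fun y => c * y + φ y)^[i] x) / c ^ (i + 1) := by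
  induction n with
  | zero => simp
  | succ n ih =>
    rw [Finset.sum_range_succ, ← add_assoc, ← ih, Function.iterate_succ_apply', pow_succ]
    field_simp

lemma Function.Semiconj.apply_iterate_eq_pow_mul {α M : Type*} [Monoid M] {a : α → M}
    {g : α → α} {c : M} (hsemi : Function.Semiconj a g (c * ·)) (n : ℕ) (x : α) :
    a (g^[n] x) = c ^ n * a x := by
  rw [hsemi.iterate_right n x, mul_left_iterate_apply]

lemma exists_abs_sub_id_le_of_add_one {a : ℝ → ℝ} (ha : Continuous a)
    (hadeg : ∀ x, a (x + 1) = a x + 1) : ∃ C, ∀ x, |a x - x| ≤ C := by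
  have hper : Function.Periodic (fun x => a x - x) 1 := fun x => by
    simp only [hadeg]
    ring
  obtain ⟨C, hC⟩ := (hper.isBounded_of_continuous one_ne_zero
    (ha.sub continuous_id)).exists_norm_le
  exact ⟨C, fun x => hC _ ⟨x, rfl⟩⟩

lemma tendstoUniformly_sub_div_pow {α : Type*} {c C : ℝ} (hc : 1 < |c|) {F : ℕ → α → ℝ}
    (hF : ∀ n x, |F n x| ≤ C) (f : α → ℝ) :
    TendstoUniformly (fun n x => f x - F n x / c ^ n) f atTop := by
  have hc₀ : 0 < |c| := one_pos.trans hc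
  have hlim : Tendsto (fun n : ℕ => C * |c|⁻¹ ^ n) atTop (nhds 0) := by
    simpa using (tendsto_pow_atTop_nhds_zero_of_lt_one (inv_nonneg.2 hc₀.le)
      (inv_lt_one_of_one_lt₀ hc)).const_mul C
  rw [Metric.tendstoUniformly_iff]
  intro ε hε
  filter_upwards [hlim.eventually (gt_mem_nhds hε)] with n hn x
  calc dist (f x) (f x - F n x / c ^ n) = |F n x| * |c|⁻¹ ^ n := by
        rw [Real.dist_eq, sub_sub_cancel, abs_div, abs_pow, div_eq_mul_inv, inv_pow]
    _ ≤ C * |c|⁻¹ ^ n := by gcongr; exact hF n x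
    _ < ε := hn

theorem stmt2_general
    (φ : ℝ → ℝ)
    (g' : ℝ → ℝ) (hg' : g' = fun x => 2 * x + φ x)
    (a : ℝ → ℝ) (ha : Continuous a) (hadeg : ∀ x : ℝ, a (x + 1) = a x + 1)
    (hsemi : ∀ x : ℝ, a (g' x) = 2 * a x) :
    TendstoUniformly
      (fun n x => x + ∑ i ∈ Finset.range n, φ (g'^[i] x) / 2 ^ (i + 1))
      a Filter.atTop := by
  obtain ⟨C, hC⟩ := exists_abs_sub_id_le_of_add_one ha hadeg
  have hpartial : ∀ n x, x + ∑ i ∈ Finset.range n, φ (g'^[i] x) / 2 ^ (i + 1) =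
      a x - (a (g'^[n] x) - g'^[n] x) / 2 ^ n := fun n x => by
    have hsemi' : Function.Semiconj a g' (2 * ·) := hsemi
    rw [sub_div, hsemi'.apply_iterate_eq_pow_mul, hg', iterate_div_pow_eq_add_sum two_ne_zero,
      mul_div_cancel_left₀ _ (pow_ne_zero n two_ne_zero), sub_sub_cancel]
  simp_rw [hpartial]
  exact tendstoUniformly_sub_div_pow (by norm_num) (fun n x => hC _) a

/-- If `g̃ = 2·id + φ` with `φ` continuous and 1-periodic, then the degree-one
semiconjugacy lift `α̃` (with `α̃ ∘ g̃ = 2 α̃`) is given by the uniformly convergent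
series `α̃ x = x + ∑_{i≥0} φ(g̃^i x)/2^{i+1}`. -/
theorem stmt2
    (φ : ℝ → ℝ) (hφ : Continuous φ) (hper : ∀ x : ℝ, φ (x + 1) = φ x)
    (g' : ℝ → ℝ) (hg' : g' = fun x => 2 * x + φ x)
    (a : ℝ → ℝ) (ha : Continuous a) (hadeg : ∀ x : ℝ, a (x + 1) = a x + 1)
    (hsemi : ∀ x : ℝ, a (g' x) = 2 * a x) :
    TendstoUniformly
      (fun n x => x + ∑ i ∈ Finset.range n, φ (g'^[i] x) / 2 ^ (i + 1))
      a Filter.atTop :=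
  stmt2_general φ g' hg' a ha hadeg hsemi
end

section
/- Let g̃ be a lift of a continuous degree-two circle map with α̃ its degree-one semiconjugacy lift (α̃ ∘ g̃ = 2·α̃, α̃(x+1) = α̃(x)+1). Then the iterates g̃ⁿ(x)/2ⁿ converge uniformly to α̃(x) as n → ∞. -/
/-!
Since `α̃ - id` is continuous and `1`-periodic it is bounded, say by `M`. Iterating the
semiconjugacy gives `α̃ (g̃ⁿ x) = 2ⁿ α̃ x`, so `g̃ⁿ x / 2ⁿ - α̃ x = (g̃ⁿ x - α̃ (g̃ⁿ x)) / 2ⁿ`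
is at most `M / 2ⁿ` in absolute value, uniformly in `x`.
-/

open Filter Topology

theorem tendstoUniformly_of_dist_le {ι α β : Type*} [PseudoMetricSpace β] {l : Filter ι}
    {F : ι → α → β} {f : α → β} {b : ι → ℝ} (hb : Tendsto b l (𝓝 0))
    (h : ∀ i x, dist (f x) (F i x) ≤ b i) : TendstoUniformly F f l := by
  rw [Metric.tendstoUniformly_iff]
  intro ε hε
  filter_upwards [hb.eventually (gt_mem_nhds hε)] with i hi x using (h i x).trans_lt hi

theorem exists_abs_sub_self_le_of_map_add_one {f : ℝ → ℝ} (hf : Continuous f)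
    (hdeg : ∀ x, f (x + 1) = f x + 1) : ∃ M, ∀ x, |f x - x| ≤ M := by
  have hper : Function.Periodic (fun x => f x - x) 1 := fun x => by
    simp only [hdeg]; ring
  obtain ⟨M, hM⟩ := isBounded_iff_forall_norm_le.mp
    (hper.isBounded_of_continuous one_ne_zero (hf.sub continuous_id))
  exact ⟨M, fun x => hM _ ⟨x, rfl⟩⟩

theorem map_iterate_eq_pow_mul {α M : Type*} [Monoid M] {g : α → α} {a : α → M} {c : M}
    (hsemi : ∀ x, a (g x) = c * a x) (n : ℕ) (x : α) : a (g^[n] x) = c ^ n * a x := by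
  rw [(Function.Semiconj.iterate_right hsemi n).eq, mul_left_iterate_apply]

theorem abs_iterate_div_pow_sub_le {g a : ℝ → ℝ} {c M : ℝ} (hc : c ≠ 0)
    (hsemi : ∀ x, a (g x) = c * a x) (hM : ∀ x, |a x - x| ≤ M) (n : ℕ) (x : ℝ) :
    |g^[n] x / c ^ n - a x| ≤ M / |c| ^ n := by
  have hcn : c ^ n ≠ 0 := pow_ne_zero n hc
  have hdiff : g^[n] x / c ^ n - a x = -(a (g^[n] x) - g^[n] x) / c ^ n := by
    rw [map_iterate_eq_pow_mul hsemi]; field_simp; ring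
  rw [hdiff, abs_div, abs_neg, abs_pow]
  gcongr
  exact hM _

theorem tendstoUniformly_iterate_div_pow {g a : ℝ → ℝ} {c : ℝ} (hc : 1 < c)
    (ha : Continuous a) (hadeg : ∀ x, a (x + 1) = a x + 1) (hsemi : ∀ x, a (g x) = c * a x) :
    TendstoUniformly (fun n x => g^[n] x / c ^ n) a atTop := by
  obtain ⟨M, hM⟩ := exists_abs_sub_self_le_of_map_add_one ha hadeg
  have hdecay : Tendsto (fun n : ℕ => M / |c| ^ n) atTop (𝓝 0) :=
    tendsto_const_nhds.div_atTop
      (tendsto_pow_atTop_atTop_of_one_lt (hc.trans_le (le_abs_self c)))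
  refine tendstoUniformly_of_dist_le hdecay fun n x => ?_
  rw [Real.dist_eq, abs_sub_comm]
  exact abs_iterate_div_pow_sub_le (by positivity) hsemi hM n x

theorem stmt3_general
    (g' : ℝ → ℝ)
    (a : ℝ → ℝ) (ha : Continuous a) (hadeg : ∀ x : ℝ, a (x + 1) = a x + 1)
    (hsemi : ∀ x : ℝ, a (g' x) = 2 * a x) :
    TendstoUniformly (fun n x => g'^[n] x / 2 ^ n) a Filter.atTop :=
  tendstoUniformly_iterate_div_pow one_lt_two ha hadeg hsemi

/-- The iterates `g̃ⁿ(x)/2ⁿ` converge uniformly to the lift `α̃` of the semiconjugacy. -/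
theorem stmt3
    (g' : ℝ → ℝ) (hg' : Continuous g') (hdeg : ∀ x : ℝ, g' (x + 1) = g' x + 2)
    (a : ℝ → ℝ) (ha : Continuous a) (hadeg : ∀ x : ℝ, a (x + 1) = a x + 1)
    (hsemi : ∀ x : ℝ, a (g' x) = 2 * a x) :
    TendstoUniformly (fun n x => g'^[n] x / 2 ^ n) a Filter.atTop :=
  stmt3_general g' a ha hadeg hsemi
end

section
/- Let g̃ = 2·id + φ be a lift of a continuous degree-two circle map (φ continuous, 1-periodic) and α̃ its degree-one semiconjugacy lift. Then for all x ∈ ℝ and all n ≥ 0, |g̃ⁿ(x) − 2ⁿ·α̃(x)| ≤ ‖φ‖_∞ (global shadowing of the g̃-orbit of x by the doubling orbit of α̃(x)). -/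
/-! The displacement `γ = α̃ - id` is continuous and `1`-periodic, so `|γ|` attains its maximum at
some `x₀`. The semiconjugacy gives `2 γ(x) = γ(g̃ x) + φ(x)`, hence at `x₀` we get
`2 |γ x₀| ≤ |γ x₀| + ‖φ‖_∞`, i.e. `‖γ‖_∞ ≤ ‖φ‖_∞`. Finally `α̃ (g̃ⁿ x) = 2ⁿ α̃ x`, so
`g̃ⁿ x - 2ⁿ α̃ x = -γ (g̃ⁿ x)`. -/

open Function Set

theorem Function.Periodic.exists_forall_le_of_continuous {α : Type*} [TopologicalSpace α]
    [LinearOrder α] [ClosedIciTopology α] {f : ℝ → α} {c : ℝ} (hp : Periodic f c) (hc : c ≠ 0)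
    (hf : Continuous f) : ∃ x₀, ∀ x, f x ≤ f x₀ := by
  obtain ⟨_, ⟨x₀, rfl⟩, hmax⟩ :=
    (hp.compact_of_continuous hc hf).exists_isGreatest (range_nonempty f)
  exact ⟨x₀, fun x => hmax ⟨x, rfl⟩⟩

theorem abs_le_of_two_mul_eq_add_comp {α : Type*} {γ φ : α → ℝ} {g : α → α} {M : ℝ}
    (hmax : ∃ x₀, ∀ x, |γ x| ≤ |γ x₀|) (hφ : ∀ x, |φ x| ≤ M)
    (h : ∀ x, 2 * γ x = γ (g x) + φ x) (x : α) : |γ x| ≤ M := by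
  obtain ⟨x₀, hx₀⟩ := hmax
  have : 2 * |γ x₀| ≤ |γ x₀| + M := calc
    2 * |γ x₀| = |γ (g x₀) + φ x₀| := by rw [← h, abs_mul, abs_two]
    _ ≤ |γ (g x₀)| + |φ x₀| := abs_add_le _ _
    _ ≤ |γ x₀| + M := add_le_add (hx₀ _) (hφ _)
  linarith [hx₀ x]

theorem stmt4_general
    (φ : ℝ → ℝ)
    (g' : ℝ → ℝ) (hg' : g' = fun x => 2 * x + φ x)
    (a : ℝ → ℝ) (ha : Continuous a) (hadeg : ∀ x : ℝ, a (x + 1) = a x + 1)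
    (hsemi : ∀ x : ℝ, a (g' x) = 2 * a x) :
    ∀ (x : ℝ) (n : ℕ), |g'^[n] x - 2 ^ n * a x| ≤ ⨆ y : ℝ, |φ y| := by
  intro x n
  set γ : ℝ → ℝ := fun y => a y - y
  have hγ : Periodic γ 1 := fun y => by simp only [γ, hadeg]; ring
  obtain ⟨x₀, hx₀⟩ : ∃ x₀, ∀ y, |γ y| ≤ |γ x₀| :=
    (hγ.comp abs).exists_forall_le_of_continuous one_ne_zero (ha.sub continuous_id).abs
  have hfe : ∀ y, 2 * γ y = γ (g' y) + φ y := fun y => by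
    have := hsemi y
    simp only [γ, hg'] at this ⊢
    linarith
  -- `φ = 2γ - γ ∘ g̃` is bounded because `γ` is, so the supremum is not a junk value.
  have hbdd : BddAbove (range fun y => |φ y|) := ⟨3 * |γ x₀|, by
    rintro _ ⟨y, rfl⟩
    calc |φ y| = |2 * γ y - γ (g' y)| := by rw [hfe]; ring_nf
      _ ≤ 2 * |γ y| + |γ (g' y)| := by
        simpa only [abs_mul, abs_two] using abs_sub (2 * γ y) (γ (g' y))
      _ ≤ 3 * |γ x₀| := by linarith [hx₀ y, hx₀ (g' y)]⟩
  have horbit : a (g'^[n] x) = 2 ^ n * a x :=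
    (Semiconj.iterate_right (f := a) (gb := (2 * ·)) hsemi n x).trans (mul_left_iterate_apply _ _)
  calc |g'^[n] x - 2 ^ n * a x| = |γ (g'^[n] x)| := by rw [← horbit, abs_sub_comm]
    _ ≤ ⨆ y : ℝ, |φ y| := abs_le_of_two_mul_eq_add_comp ⟨x₀, hx₀⟩ (le_ciSup hbdd) hfe _

/-- Global shadowing: `|g̃ⁿ(x) − 2ⁿ α̃(x)| ≤ ‖φ‖_∞` for all `x` and `n`. -/
theorem stmt4
    (φ : ℝ → ℝ) (hφ : Continuous φ) (hper : ∀ x : ℝ, φ (x + 1) = φ x)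
    (g' : ℝ → ℝ) (hg' : g' = fun x => 2 * x + φ x)
    (a : ℝ → ℝ) (ha : Continuous a) (hadeg : ∀ x : ℝ, a (x + 1) = a x + 1)
    (hsemi : ∀ x : ℝ, a (g' x) = 2 * a x) :
    ∀ (x : ℝ) (n : ℕ), |g'^[n] x - 2 ^ n * a x| ≤ ⨆ y : ℝ, |φ y| :=
  stmt4_general φ g' hg' a ha hadeg hsemi
end

section
/- If g is a continuous degree-two circle map whose semiconjugacy α to the doubling map is light (every point preimage of α is totally disconnected), then g is locally eventually onto: for every nonempty open set U ⊆ S¹ there exists n > 0 with gⁿ(U) = S¹. -/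
/-!
Lift everything to ℝ. The function `α' ∘ g' - 2 α'` is continuous and integer-valued, hence a
constant `m`, so `α' ∘ g' = 2 α' + m` and `α'` doubles distances along `g'`-orbits:
`α' (g'ⁿ y) - α' (g'ⁿ x) = 2ⁿ (α' y - α' x)`. Lightness of `α` forces `α'` to be nonconstant on
every short interval `[a, c]` inside a lift of `U`, and since `α' - id` is bounded, `g'ⁿ` stretches
`[a, c]` over an interval of length at least one for large `n`, whose image is the whole circle.
-/

open Set Function Filter

namespace AddCircle

variable {p : ℝ} [Fact (0 < p)]

theorem coe_image_uIcc_eq_univ {a b : ℝ} (h : p ≤ |b - a|) :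
    ((↑) : ℝ → AddCircle p) '' uIcc a b = univ := by
  refine eq_univ_of_univ_subset ((coe_image_Icc_eq p (min a b)).symm.trans_subset
    (image_mono (Icc_subset_Icc_right ?_)))
  linarith [max_sub_min_eq_abs a b]

theorem image_uIcc_eq_univ_of_le_abs_sub {F : ℝ → ℝ} (hF : Continuous F) {c d : ℝ}
    (h : p ≤ |F d - F c|) : (fun x ↦ (F x : AddCircle p)) '' uIcc c d = univ := by
  rw [← image_image ((↑) : ℝ → AddCircle p) F]
  exact eq_univ_of_univ_subset ((coe_image_uIcc_eq_univ h).symm.trans_subset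
    (image_mono (intermediate_value_uIcc hF.continuousOn)))

theorem exists_ne_of_isTotallyDisconnected_fiber {Y : Type*} (α : AddCircle p → Y)
    (hlight : ∀ y, IsTotallyDisconnected (α ⁻¹' {y})) {a u : ℝ} (hau : a < u)
    (hup : u ≤ a + p) : ∃ c ∈ Ico a u, α c ≠ α a := by
  by_contra! hconst
  have hfiber : ((↑) : ℝ → AddCircle p) '' Ico a u ⊆ α ⁻¹' {α a} := by
    rintro _ ⟨c, hc, rfl⟩
    exact hconst c hc
  have hmid : (a + u) / 2 ∈ Ico a u := ⟨by linarith, by linarith⟩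
  have hsub := hlight _ _ hfiber
    (isPreconnected_Ico.image _ continuous_quotient_mk'.continuousOn)
    (mem_image_of_mem _ hmid) (mem_image_of_mem _ (left_mem_Ico.mpr hau))
  rw [coe_eq_coe_iff_of_mem_Ico (Ico_subset_Ico_right hup hmid)
    (Ico_subset_Ico_right hup (left_mem_Ico.mpr hau))] at hsub
  linarith

end AddCircle

theorem exists_abs_sub_le_of_map_add_one {φ : ℝ → ℝ} (hφ : Continuous φ)
    (h : ∀ x, φ (x + 1) = φ x + 1) : ∃ C, ∀ x, |φ x - x| ≤ C := by
  have hper : Periodic (fun x ↦ φ x - x) 1 := fun x ↦ by simp only [h]; ring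
  simpa [mem_range, forall_exists_index, forall_apply_eq_imp_iff] using
    isBounded_iff_forall_norm_le.mp
      (hper.isBounded_of_continuous one_ne_zero (hφ.sub continuous_id))

theorem abs_map_sub_le_abs_sub_add {φ : ℝ → ℝ} {C : ℝ} (hC : ∀ x, |φ x - x| ≤ C) (x y : ℝ) :
    |φ y - φ x| ≤ |y - x| + 2 * C := by
  calc |φ y - φ x| = |(φ y - y) - (φ x - x) + (y - x)| := by ring_nf
    _ ≤ |φ y - y| + |φ x - x| + |y - x| :=
      (abs_add_le _ _).trans (by gcongr; exact abs_sub _ _)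
    _ ≤ |y - x| + 2 * C := by linarith [hC x, hC y]

theorem iterate_sub_eq_pow_mul {R : Type*} [CommRing R] {f φ : R → R} {a m : R}
    (hstep : ∀ x, φ (f x) = a * φ x + m) (n : ℕ) (x y : R) :
    φ (f^[n] y) - φ (f^[n] x) = a ^ n * (φ y - φ x) := by
  induction n with
  | zero => simp
  | succ n ih =>
    rw [iterate_succ_apply', iterate_succ_apply', hstep, hstep, pow_succ']
    linear_combination a * ih

theorem exists_lift_map_eq_two_mul_add {g α : AddCircle (1 : ℝ) → AddCircle (1 : ℝ)}
    {g' α' : ℝ → ℝ} (hg' : Continuous g') (hα' : Continuous α')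
    (hglift : ∀ x : ℝ, g x = g' x) (hαlift : ∀ x : ℝ, α x = α' x)
    (hsemi : ∀ θ, α (g θ) = α θ + α θ) : ∃ m : ℝ, ∀ x, α' (g' x) = 2 * α' x + m := by
  have hint : MapsTo (fun x ↦ α' (g' x) - 2 * α' x) univ
      (AddSubgroup.zmultiples (1 : ℝ)) := by
    intro x _
    have hx := hsemi x
    rw [hglift, hαlift, hαlift] at hx
    rw [SetLike.mem_coe, ← QuotientAddGroup.eq_zero_iff]
    change ((α' (g' x) - 2 * α' x : ℝ) : AddCircle (1 : ℝ)) = 0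
    rw [AddCircle.coe_sub, hx, two_mul, AddCircle.coe_add, sub_self]
  have hdisc : IsDiscrete (AddSubgroup.zmultiples (1 : ℝ) : Set ℝ) :=
    isDiscrete_iff_discreteTopology.mpr
      (inferInstanceAs (DiscreteTopology (AddSubgroup.zmultiples (1 : ℝ))))
  refine ⟨α' (g' 0) - 2 * α' 0, fun x ↦ ?_⟩
  have := isPreconnected_univ.constant_of_mapsTo hdisc
    (f := fun x ↦ α' (g' x) - 2 * α' x) (by fun_prop) hint (mem_univ x) (mem_univ 0)
  linarith

theorem stmt5_general
    (g : AddCircle (1 : ℝ) → AddCircle (1 : ℝ))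
    (g' : ℝ → ℝ) (hg' : Continuous g')
    (hglift : ∀ x : ℝ, g (x : AddCircle (1 : ℝ)) = ((g' x : ℝ) : AddCircle (1 : ℝ)))
    (α : AddCircle (1 : ℝ) → AddCircle (1 : ℝ))
    (α' : ℝ → ℝ) (hα' : Continuous α')
    (hαlift : ∀ x : ℝ, α (x : AddCircle (1 : ℝ)) = ((α' x : ℝ) : AddCircle (1 : ℝ)))
    (hαdeg : ∀ x : ℝ, α' (x + 1) = α' x + 1)
    (hsemi : ∀ θ, α (g θ) = α θ + α θ)
    (hlight : ∀ θ : AddCircle (1 : ℝ), IsTotallyDisconnected (α ⁻¹' {θ})) :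
    ∀ U : Set (AddCircle (1 : ℝ)), IsOpen U → U.Nonempty →
      ∃ n : ℕ, 0 < n ∧ g^[n] '' U = Set.univ := by
  rintro U hU ⟨θ, hθ⟩
  obtain ⟨a, rfl⟩ := QuotientAddGroup.mk_surjective θ
  obtain ⟨m, hm⟩ := exists_lift_map_eq_two_mul_add hg' hα' hglift hαlift hsemi
  obtain ⟨C, hC⟩ := exists_abs_sub_le_of_map_add_one hα' hαdeg
  obtain ⟨u, ⟨hau, hup⟩, hIco⟩ := exists_Ico_subset_of_mem_nhds'
    ((hU.preimage continuous_quotient_mk').mem_nhds hθ) (lt_add_one a)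
  obtain ⟨c, hc, hne⟩ := AddCircle.exists_ne_of_isTotallyDisconnected_fiber α hlight hau hup
  have hδ : 0 < |α' c - α' a| :=
    abs_pos.mpr (sub_ne_zero.mpr fun h ↦ hne (by rw [hαlift, hαlift, h]))
  obtain ⟨n, hn, hpos⟩ := (((tendsto_pow_atTop_atTop_of_one_lt one_lt_two).eventually_ge_atTop
    ((1 + 2 * C) / |α' c - α' a|)).and (eventually_gt_atTop 0)).exists
  have hstretch : 1 ≤ |g'^[n] c - g'^[n] a| := by
    rw [div_le_iff₀ hδ] at hn
    have := abs_map_sub_le_abs_sub_add hC (g'^[n] a) (g'^[n] c)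
    rw [iterate_sub_eq_pow_mul hm n a c, abs_mul, abs_pow, abs_two] at this
    linarith
  have hlift : Semiconj ((↑) : ℝ → AddCircle (1 : ℝ)) g'^[n] g^[n] :=
    Semiconj.iterate_right (fun x ↦ (hglift x).symm) n
  refine ⟨n, hpos, eq_univ_of_univ_subset ?_⟩
  rw [← AddCircle.image_uIcc_eq_univ_of_le_abs_sub (hg'.iterate n) hstretch]
  rintro _ ⟨x, hx, rfl⟩
  rw [uIcc_of_le hc.1] at hx
  exact ⟨x, hIco (Icc_subset_Ico_right hc.2 hx), (hlift x).symm⟩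

/-- If the semiconjugacy `α` of a continuous degree-two circle map `g` to the doubling
map is light, then `g` is locally eventually onto. -/
theorem stmt5
    (g : AddCircle (1 : ℝ) → AddCircle (1 : ℝ)) (hg : Continuous g)
    (g' : ℝ → ℝ) (hg' : Continuous g')
    (hglift : ∀ x : ℝ, g (x : AddCircle (1 : ℝ)) = ((g' x : ℝ) : AddCircle (1 : ℝ)))
    (hgdeg : ∀ x : ℝ, g' (x + 1) = g' x + 2)
    (α : AddCircle (1 : ℝ) → AddCircle (1 : ℝ)) (hα : Continuous α)
    (α' : ℝ → ℝ) (hα' : Continuous α')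
    (hαlift : ∀ x : ℝ, α (x : AddCircle (1 : ℝ)) = ((α' x : ℝ) : AddCircle (1 : ℝ)))
    (hαdeg : ∀ x : ℝ, α' (x + 1) = α' x + 1)
    (hsemi : ∀ θ, α (g θ) = α θ + α θ)
    (hlight : ∀ θ : AddCircle (1 : ℝ), IsTotallyDisconnected (α ⁻¹' {θ})) :
    ∀ U : Set (AddCircle (1 : ℝ)), IsOpen U → U.Nonempty →
      ∃ n : ℕ, 0 < n ∧ g^[n] '' U = Set.univ :=
  stmt5_general g g' hg' hglift α α' hα' hαlift hαdeg hsemi hlight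
end

section
/- If g is a transitive continuous degree-two circle map (g has a dense orbit), then its semiconjugacy α to the angle-doubling map is light: there is no nontrivial closed interval J ⊆ S¹ with α(J) a single point. -/
/-!
If `α` were constant, equal to `θ`, on an open arc, the dense `g`-orbit of `x₀` would visit that
arc at two times `a < b`, so the orbit of `α x₀` under the doubling map `D`, which is the image
of the `g`-orbit under `α`, would satisfy `D^[a] (α x₀) = θ = D^[b] (α x₀)` and hence be finite.
By density and continuity the range of `α` would then be finite, whereas a degree-one circle map
is onto.
-/

open Set Function Filter Topology

instance AddCircle.infinite {𝕜 : Type*} [Field 𝕜] [LinearOrder 𝕜] [IsStrictOrderedRing 𝕜]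
    [Archimedean 𝕜] (p : 𝕜) [hp : Fact (0 < p)] : Infinite (AddCircle p) :=
  have : Infinite (Ico 0 (0 + p)) := (Ico_infinite (by simpa using hp.out)).to_subtype
  (AddCircle.equivIco p 0).infinite_iff.mpr this

theorem DenseRange.exists_lt_mem_open {X : Type*} [TopologicalSpace X] [T1Space X]
    [∀ x : X, NeBot (𝓝[≠] x)] {u : ℕ → X} (hu : DenseRange u) {U : Set X} (hU : IsOpen U)
    (hne : U.Nonempty) : ∃ m n, m < n ∧ u m ∈ U ∧ u n ∈ U := by
  obtain ⟨m, hm⟩ := hu.exists_mem_open hU hne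
  obtain ⟨_, ⟨⟨n, rfl⟩, hnm⟩, hn⟩ := (Dense.sdiff_singleton hu (u m)).exists_mem_open hU ⟨u m, hm⟩
  have : m ≠ n := by rintro rfl; exact hnm rfl
  rcases this.lt_or_gt with h | h
  exacts [⟨m, n, h, hm, hn⟩, ⟨n, m, h, hn, hm⟩]

theorem Function.finite_range_iterate_of_iterate_eq {α : Type*} {f : α → α} {x : α} {a b : ℕ}
    (hab : a < b) (h : f^[a] x = f^[b] x) : (range fun n => f^[n] x).Finite := by
  have hper : IsPeriodicPt f (b - a) (f^[a] x) := by
    rw [IsPeriodicPt, IsFixedPt, ← iterate_add_apply, Nat.sub_add_cancel hab.le, h]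
  refine ((finite_Iio b).image fun n => f^[n] x).subset ?_
  rintro _ ⟨n, rfl⟩
  rcases lt_or_ge n a with hn | hn
  · exact ⟨n, hn.trans hab, rfl⟩
  · refine ⟨(n - a) % (b - a) + a, ?_, ?_⟩
    · have := Nat.mod_lt (n - a) (Nat.sub_pos_of_lt hab)
      simp only [mem_Iio]; omega
    · dsimp only
      rw [iterate_add_apply, hper.iterate_mod_apply, ← iterate_add_apply, Nat.sub_add_cancel hn]

theorem Function.Semiconj.finite_range_of_eqOn_open {X Y : Type*} [TopologicalSpace X]
    [T1Space X] [∀ x : X, NeBot (𝓝[≠] x)] [TopologicalSpace Y] [T1Space Y]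
    {α : X → Y} {g : X → X} {D : Y → Y} (hsemi : Semiconj α g D) (hα : Continuous α)
    {x₀ : X} (hx₀ : DenseRange fun n => g^[n] x₀) {U : Set X} (hU : IsOpen U)
    (hne : U.Nonempty) {θ : Y} (hθ : EqOn α (fun _ => θ) U) : (range α).Finite := by
  have horbit : ∀ n, α (g^[n] x₀) = D^[n] (α x₀) := fun n => (hsemi.iterate_right n).eq x₀
  obtain ⟨a, b, hab, ha, hb⟩ := hx₀.exists_lt_mem_open hU hne
  have hfin := finite_range_iterate_of_iterate_eq hab <| by
    rw [← horbit, ← horbit, hθ ha, hθ hb]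
  refine hfin.subset <| (hα.range_subset_closure_image_dense hx₀).trans ?_
  rw [← range_comp, hfin.isClosed.closure_subset_iff]
  rintro _ ⟨n, rfl⟩
  exact ⟨n, (horbit n).symm⟩

theorem AddCircle.surjective_of_lift {p : ℝ} (hp : 0 < p) {α : AddCircle p → AddCircle p}
    {α' : ℝ → ℝ} (hα' : Continuous α') (hlift : ∀ x : ℝ, α x = α' x)
    (hdeg : ∀ x : ℝ, α' (x + p) = α' x + p) : Surjective α := by
  intro y
  induction y using QuotientAddGroup.induction_on with | H r => ?_
  have hr : toIcoMod hp (α' 0) r ∈ Icc (α' 0) (α' p) := by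
    have hp' : α' p = α' 0 + p := by simpa using hdeg 0
    exact hp' ▸ Ico_subset_Icc_self (toIcoMod_mem_Ico hp (α' 0) r)
  obtain ⟨c, -, hc⟩ := intermediate_value_Icc hp.le hα'.continuousOn hr
  refine ⟨c, ?_⟩
  rw [hlift, hc, toIcoMod, AddCircle.coe_sub, AddCircle.coe_zsmul, AddCircle.coe_period,
    smul_zero, sub_zero]

theorem stmt6_general
    (g : AddCircle (1 : ℝ) → AddCircle (1 : ℝ))
    (α : AddCircle (1 : ℝ) → AddCircle (1 : ℝ)) (hα : Continuous α)
    (α' : ℝ → ℝ) (hα' : Continuous α')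
    (hαlift : ∀ x : ℝ, α (x : AddCircle (1 : ℝ)) = ((α' x : ℝ) : AddCircle (1 : ℝ)))
    (hαdeg : ∀ x : ℝ, α' (x + 1) = α' x + 1)
    (hsemi : ∀ θ, α (g θ) = α θ + α θ)
    (htrans : ∃ x₀ : AddCircle (1 : ℝ), Dense (Set.range fun n : ℕ => g^[n] x₀)) :
    ∀ s t : ℝ, s < t →
      ¬ ∃ θ : AddCircle (1 : ℝ), ∀ x ∈ Set.Icc s t, α (x : AddCircle (1 : ℝ)) = θ := by
  rintro s t hst ⟨θ, hθ⟩
  obtain ⟨x₀, hx₀⟩ := htrans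
  have harc : IsOpen (((↑) : ℝ → AddCircle (1 : ℝ)) '' Ioo s t) :=
    QuotientAddGroup.isOpenMap_coe _ isOpen_Ioo
  have hfin : (range α).Finite :=
    Semiconj.finite_range_of_eqOn_open (D := fun y => y + y) hsemi hα hx₀ harc
      ((nonempty_Ioo.2 hst).image _)
      (by rintro _ ⟨x, hx, rfl⟩; exact hθ x (Ioo_subset_Icc_self hx))
  rw [(AddCircle.surjective_of_lift one_pos hα' hαlift hαdeg).range_eq] at hfin
  exact infinite_univ hfin

/-- If a continuous degree-two circle map `g` is transitive, then its semiconjugacy `α`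
to the doubling map is light: `α` is not constant on any nontrivial closed interval. -/
theorem stmt6
    (g : AddCircle (1 : ℝ) → AddCircle (1 : ℝ)) (hg : Continuous g)
    (g' : ℝ → ℝ) (hg' : Continuous g')
    (hglift : ∀ x : ℝ, g (x : AddCircle (1 : ℝ)) = ((g' x : ℝ) : AddCircle (1 : ℝ)))
    (hgdeg : ∀ x : ℝ, g' (x + 1) = g' x + 2)
    (α : AddCircle (1 : ℝ) → AddCircle (1 : ℝ)) (hα : Continuous α)
    (α' : ℝ → ℝ) (hα' : Continuous α')
    (hαlift : ∀ x : ℝ, α (x : AddCircle (1 : ℝ)) = ((α' x : ℝ) : AddCircle (1 : ℝ)))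
    (hαdeg : ∀ x : ℝ, α' (x + 1) = α' x + 1)
    (hsemi : ∀ θ, α (g θ) = α θ + α θ)
    (htrans : ∃ x₀ : AddCircle (1 : ℝ), Dense (Set.range fun n : ℕ => g^[n] x₀)) :
    ∀ s t : ℝ, s < t →
      ¬ ∃ θ : AddCircle (1 : ℝ), ∀ x ∈ Set.Icc s t, α (x : AddCircle (1 : ℝ)) = θ :=
  stmt6_general g α hα α' hα' hαlift hαdeg hsemi htrans
end

section
/- With p_r = min α̃⁻¹(r), one has g̃(p_r) = p_{2r} for every r ∈ ℝ. -/
/-!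
`g̃ (p r)` lies in the fibre `α̃⁻¹(2r)`, so `p (2r) ≤ g̃ (p r)`. Since `g̃` is a lift of positive
degree it tends to `-∞` at `-∞`, so by the intermediate value theorem `p (2r) = g̃ t` for some
`t ≤ p r`. Then `α̃ t = r` by the semiconjugacy, hence `t = p r` by minimality.
-/

theorem exists_le_eq_of_map_add_one {g : ℝ → ℝ} {d : ℝ} (hg : Continuous g)
    (hdeg : ∀ x, g (x + 1) = g x + d) (hd : 0 < d) {x y : ℝ} (hy : y ≤ g x) :
    ∃ t ≤ x, g t = y := by
  let G : AddConstMap ℝ ℝ 1 d := ⟨g, hdeg⟩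
  obtain ⟨n, hn⟩ := Archimedean.arch (g x - y) hd
  have hshift : g (x - n) = g x - n • d := AddConstMapClass.map_sub_nat' G x n
  have hmem : y ∈ Set.Icc (g (x - n)) (g x) := ⟨by rw [hshift]; linarith, hy⟩
  obtain ⟨t, ht, hgt⟩ :=
    intermediate_value_Icc (sub_le_self x n.cast_nonneg) hg.continuousOn hmem
  exact ⟨t, ht.2, hgt⟩

theorem stmt13_general
    (g' : ℝ → ℝ) (hg' : Continuous g') (hgdeg : ∀ x : ℝ, g' (x + 1) = g' x + 2)
    (a : ℝ → ℝ)
    (hsemi : ∀ x : ℝ, a (g' x) = 2 * a x)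
    (p : ℝ → ℝ) (hp : ∀ r : ℝ, IsLeast {x : ℝ | a x = r} (p r)) :
    ∀ r : ℝ, g' (p r) = p (2 * r) := by
  intro r
  obtain ⟨hpr, hpr_min⟩ := hp r
  obtain ⟨hp2r, hp2r_min⟩ := hp (2 * r)
  have hle : p (2 * r) ≤ g' (p r) := hp2r_min (by rw [Set.mem_ofPred_eq, hsemi, hpr])
  obtain ⟨t, ht_le, hgt⟩ := exists_le_eq_of_map_add_one hg' hgdeg two_pos hle
  have hat : a t = r := by
    have := hsemi t
    rw [hgt, hp2r] at this
    linarith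
  rw [← le_antisymm ht_le (hpr_min hat), hgt]

/-- Property of `p r = min α̃⁻¹(r)`, where `α̃` is the degree-one semiconjugacy lift
(`α̃ ∘ g̃ = 2 α̃`) of a lift `g̃` of a continuous degree-two circle map. -/
theorem stmt13
    (g' : ℝ → ℝ) (hg' : Continuous g') (hgdeg : ∀ x : ℝ, g' (x + 1) = g' x + 2)
    (a : ℝ → ℝ) (ha : Continuous a) (hasurj : Function.Surjective a)
    (hadeg : ∀ x : ℝ, a (x + 1) = a x + 1)
    (hsemi : ∀ x : ℝ, a (g' x) = 2 * a x)
    (p : ℝ → ℝ) (hp : ∀ r : ℝ, IsLeast {x : ℝ | a x = r} (p r)) :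
    ∀ r : ℝ, g' (p r) = p (2 * r) :=
  stmt13_general g' hg' hgdeg a hsemi p hp
end

section
/- With p_r = min α̃⁻¹(r), if x < p_r then g̃(x) ≤ g̃(p_r) = p_{2r}. -/
/-!
Since `g̃ (x + 1) = g̃ x + 2`, `g̃` tends to `-∞` at `-∞`, so by the intermediate value theorem
every value `≤ g̃ c` is taken at some `z ≤ c`. If that value is `p_{2r}`, then
`2 α̃ z = α̃ (g̃ z) = 2r`, so `α̃ z = r` and `z ≥ p_r`. With `c = p_r` this forces `g̃ p_r = p_{2r}`
(note `p_{2r} ≤ g̃ p_r` as `α̃ (g̃ p_r) = 2r`), and with `c = x < p_r` it rules out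
`g̃ x > g̃ p_r`.
-/

open Filter Set

theorem tendsto_atBot_of_add_one_eq {f : ℝ → ℝ} {d : ℝ} (hf : Continuous f) (hd : 0 < d)
    (hfd : ∀ x, f (x + 1) = f x + d) : Tendsto f atBot atBot := by
  -- `f x - d x` is continuous and periodic, so bounded above by some `M`; then `f x ≤ d x + M`.
  have hper : Function.Periodic (fun x => f x - d * x) 1 := fun x => by
    simp only [hfd]; ring
  obtain ⟨M, hM⟩ := (hper.compact_of_continuous one_ne_zero (by fun_prop)).bddAbove
  refine tendsto_atBot_mono (fun x => ?_)
    (tendsto_atBot_add_const_right _ M (tendsto_id.const_mul_atBot hd))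
  have := hM (mem_range_self x)
  simp only [id]
  linarith

section LeastPreimage

variable {g a : ℝ → ℝ} {k r p q : ℝ}

theorem exists_mem_Icc_apply_eq_of_le_apply (hg : Continuous g)
    (hbot : Tendsto g atBot atBot) (hsemi : ∀ x, a (g x) = k * a x) (hk : k ≠ 0)
    (hp : IsLeast {x | a x = r} p) (hq : IsLeast {x | a x = k * r} q) {c : ℝ}
    (hc : q ≤ g c) : ∃ z ∈ Icc p c, g z = q := by
  obtain ⟨z, hzc, hgz⟩ := intermediate_value_Iic hg.continuousOn hbot hc
  have haz : a z = r := mul_left_cancel₀ hk (by rw [← hsemi, hgz, hq.1])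
  exact ⟨z, ⟨hp.2 haz, hzc⟩, hgz⟩

theorem apply_least_eq_least (hg : Continuous g) (hbot : Tendsto g atBot atBot)
    (hsemi : ∀ x, a (g x) = k * a x) (hk : k ≠ 0)
    (hp : IsLeast {x | a x = r} p) (hq : IsLeast {x | a x = k * r} q) : g p = q := by
  have hq_le : q ≤ g p := hq.2 (show a (g p) = k * r by rw [hsemi, hp.1])
  obtain ⟨z, ⟨hpz, hzp⟩, hgz⟩ :=
    exists_mem_Icc_apply_eq_of_le_apply hg hbot hsemi hk hp hq hq_le
  rwa [le_antisymm hzp hpz] at hgz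

theorem apply_le_apply_least_of_lt (hg : Continuous g) (hbot : Tendsto g atBot atBot)
    (hsemi : ∀ x, a (g x) = k * a x) (hk : k ≠ 0)
    (hp : IsLeast {x | a x = r} p) (hq : IsLeast {x | a x = k * r} q) {x : ℝ}
    (hx : x < p) : g x ≤ g p := by
  by_contra! hlt
  rw [apply_least_eq_least hg hbot hsemi hk hp hq] at hlt
  obtain ⟨z, ⟨hpz, hzx⟩, -⟩ :=
    exists_mem_Icc_apply_eq_of_le_apply hg hbot hsemi hk hp hq hlt.le
  linarith

end LeastPreimage

theorem stmt14_general
    (g' : ℝ → ℝ) (hg' : Continuous g') (hgdeg : ∀ x : ℝ, g' (x + 1) = g' x + 2)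
    (a : ℝ → ℝ)
    (hsemi : ∀ x : ℝ, a (g' x) = 2 * a x)
    (p : ℝ → ℝ) (hp : ∀ r : ℝ, IsLeast {x : ℝ | a x = r} (p r)) :
    ∀ r x : ℝ, x < p r → g' x ≤ g' (p r) ∧ g' (p r) = p (2 * r) := by
  intro r x hx
  have hbot := tendsto_atBot_of_add_one_eq hg' two_pos hgdeg
  exact ⟨apply_le_apply_least_of_lt hg' hbot hsemi two_ne_zero (hp r) (hp (2 * r)) hx,
    apply_least_eq_least hg' hbot hsemi two_ne_zero (hp r) (hp (2 * r))⟩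

/-- Property of `p r = min α̃⁻¹(r)`, where `α̃` is the degree-one semiconjugacy lift
(`α̃ ∘ g̃ = 2 α̃`) of a lift `g̃` of a continuous degree-two circle map. -/
theorem stmt14
    (g' : ℝ → ℝ) (hg' : Continuous g') (hgdeg : ∀ x : ℝ, g' (x + 1) = g' x + 2)
    (a : ℝ → ℝ) (ha : Continuous a) (hasurj : Function.Surjective a)
    (hadeg : ∀ x : ℝ, a (x + 1) = a x + 1)
    (hsemi : ∀ x : ℝ, a (g' x) = 2 * a x)
    (p : ℝ → ℝ) (hp : ∀ r : ℝ, IsLeast {x : ℝ | a x = r} (p r)) :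
    ∀ r x : ℝ, x < p r → g' x ≤ g' (p r) ∧ g' (p r) = p (2 * r) :=
  stmt14_general g' hg' hgdeg a hsemi p hp
end

section
/- Let g be a continuous degree-two circle map whose semiconjugacy α to angle doubling is light but not injective, with lift g̃ normalized so that p_{0} := min α̃⁻¹(0) = 0. Then there exist N ∈ ℕ, an integer K with 0 ≤ K < 2^N, and a point x̂ with p_{K/2^N} < x̂ < p_{(K+1)/2^N} such that g̃^N(x̂) = K − 1. -/
/-!
A monotone lift `α'` with `α' a = α' b`, `a ≤ b`, is constant on `[a, b]`, so `α` would map the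
arc from `a` to `b` into one fiber; lightness then forces `a ≡ b (mod 1)`, so non-injectivity of `α`
yields `u ≤ v` with `α' v < α' u`. Since `α' - id` is periodic, hence bounded by some `C`, the
semiconjugacy gives `g'^[N] v ≤ 2 ^ N * α' v + C`, while `g'^[N]` sends `p (K / 2 ^ N)` to
`p K = K`. Taking `N` with `2 ^ N * (α' u - α' v) > C + 2` and `K` maximal with
`p (K / 2 ^ N) ≤ v`, we get `K ≥ 2 ^ N * α' u - 1 > g'^[N] v + 1`, and the intermediate value
theorem on `[p (K / 2 ^ N), v]` produces the fold. An integer translation finally brings `K`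
into `[0, 2 ^ N)`.
-/

open Function Set

section DegreeLift

variable {f : ℝ → ℝ} {c : ℝ}

theorem periodic_sub_mul_of_map_add_one (h : ∀ x, f (x + 1) = f x + c) :
    Periodic (fun x => f x - c * x) 1 := fun x => by
  simp only [h]; ring

theorem map_add_intCast_of_map_add_one (h : ∀ x, f (x + 1) = f x + c) (n : ℤ) (x : ℝ) :
    f (x + n) = f x + n * c := by
  have := (periodic_sub_mul_of_map_add_one h).int_mul n x
  simp only [mul_one] at this
  linarith

theorem exists_abs_sub_mul_le_of_map_add_one (hf : Continuous f)
    (h : ∀ x, f (x + 1) = f x + c) : ∃ C, ∀ x, |f x - c * x| ≤ C := by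
  obtain ⟨C, hC⟩ := ((periodic_sub_mul_of_map_add_one h).compact_of_continuous one_ne_zero
    (by fun_prop)).isBounded.exists_norm_le
  exact ⟨C, fun x => hC _ (mem_range_self x)⟩

theorem exists_le_map_eq_of_map_add_one (hf : Continuous f) (h : ∀ x, f (x + 1) = f x + c)
    (hc : 0 < c) {x y : ℝ} (hy : y ≤ f x) : ∃ z ≤ x, f z = y := by
  obtain ⟨n, hn⟩ := exists_nat_ge ((f x - y) / c)
  rw [div_le_iff₀ hc] at hn
  have hshift : f (x - n) = f x - n * c := by
    simpa [sub_eq_add_neg] using map_add_intCast_of_map_add_one h (-n) x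
  obtain ⟨z, hz, hfz⟩ := intermediate_value_Icc (sub_le_self x n.cast_nonneg) hf.continuousOn
    ⟨by linarith, hy⟩
  exact ⟨z, hz.2, hfz⟩

theorem iterate_map_add_one {d : ℤ} (h : ∀ x, f (x + 1) = f x + d) (N : ℕ) (x : ℝ) :
    f^[N] (x + 1) = f^[N] x + (d : ℝ) ^ N := by
  induction N with
  | zero => simp
  | succ N ih =>
    rw [iterate_succ_apply', iterate_succ_apply', ih]
    have := map_add_intCast_of_map_add_one h (d ^ N) (f^[N] x)
    push_cast at this
    rw [this, pow_succ]

end DegreeLift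

theorem apply_iterate_eq_pow_mul {f a : ℝ → ℝ} {d : ℝ} (h : ∀ x, a (f x) = d * a x) (N : ℕ)
    (x : ℝ) : a (f^[N] x) = d ^ N * a x := by
  have hsc : Semiconj a f (d * ·) := h
  rw [(hsc.iterate_right N).eq x, mul_left_iterate_apply]

section LeastPreimage

variable {a p : ℝ → ℝ}

theorem leastPreimage_le_of_le (ha : Continuous a) (hdeg : ∀ x, a (x + 1) = a x + 1)
    (hp : ∀ r, IsLeast {x | a x = r} (p r)) {r x : ℝ} (h : r ≤ a x) : p r ≤ x := by
  obtain ⟨z, hzx, hz⟩ := exists_le_map_eq_of_map_add_one ha hdeg one_pos h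
  exact (hp r).2 hz |>.trans hzx

theorem leastPreimage_add_intCast (hdeg : ∀ x, a (x + 1) = a x + 1)
    (hp : ∀ r, IsLeast {x | a x = r} (p r)) (r : ℝ) (n : ℤ) : p (r + n) = p r + n := by
  have hshift (x : ℝ) (n : ℤ) : a (x + n) = a x + n := by
    simpa using map_add_intCast_of_map_add_one hdeg n x
  have hval (r : ℝ) : a (p r) = r := (hp r).1
  refine le_antisymm ((hp _).2 ?_) ?_
  · change a (p r + n) = r + n
    rw [hshift, hval]
  · have : p r ≤ p (r + n) + (-n : ℤ) := (hp r).2 <| by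
      change a _ = r
      rw [hshift, hval]; push_cast; ring
    push_cast at this
    linarith

theorem leastPreimage_intCast (hdeg : ∀ x, a (x + 1) = a x + 1)
    (hp : ∀ r, IsLeast {x | a x = r} (p r)) (h0 : p 0 = 0) (k : ℤ) : p k = k := by
  simpa [h0] using leastPreimage_add_intCast hdeg hp 0 k

theorem exists_greatest_leastPreimage_dyadic_le (ha : Continuous a)
    (hdeg : ∀ x, a (x + 1) = a x + 1) (hp : ∀ r, IsLeast {x | a x = r} (p r)) (N : ℕ)
    {v : ℝ} {j₀ : ℤ} (hj₀ : p (j₀ / 2 ^ N) ≤ v) :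
    ∃ K : ℤ, p (K / 2 ^ N) ≤ v ∧ ∀ j : ℤ, p (j / 2 ^ N) ≤ v → j ≤ K := by
  obtain ⟨C, hC⟩ := exists_abs_sub_mul_le_of_map_add_one ha hdeg
  refine Int.exists_greatest_of_bdd ⟨⌈2 ^ N * (v + C)⌉, fun j hj => ?_⟩ ⟨j₀, hj₀⟩
  have hbound := (abs_le.1 (hC (p (j / 2 ^ N)))).2
  rw [(hp _).1, one_mul] at hbound
  have : (j : ℝ) ≤ 2 ^ N * (v + C) := by
    rw [mul_comm, ← div_le_iff₀ (by positivity)]; linarith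
  exact_mod_cast this.trans (Int.le_ceil _)

end LeastPreimage

section Dynamics

variable {f a p : ℝ → ℝ}

theorem map_leastPreimage_half (hf : Continuous f) (hfdeg : ∀ x, f (x + 1) = f x + 2)
    (hsemi : ∀ x, a (f x) = 2 * a x) (hp : ∀ r, IsLeast {x | a x = r} (p r)) (t : ℝ) :
    f (p (t / 2)) = p t := by
  have hval (r : ℝ) : a (p r) = r := (hp r).1
  have hle : p t ≤ f (p (t / 2)) := (hp t).2 (show a _ = t by rw [hsemi, hval]; ring)
  obtain ⟨z, hz, hfz⟩ := exists_le_map_eq_of_map_add_one hf hfdeg two_pos hle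
  have : p (t / 2) ≤ z := (hp _).2 <| show a z = t / 2 by
    have := hsemi z
    rw [hfz, hval] at this
    linarith
  rwa [le_antisymm hz this] at hfz

theorem iterate_leastPreimage_div_two_pow (hf : Continuous f)
    (hfdeg : ∀ x, f (x + 1) = f x + 2) (hsemi : ∀ x, a (f x) = 2 * a x)
    (hp : ∀ r, IsLeast {x | a x = r} (p r)) (N : ℕ) (t : ℝ) : f^[N] (p (t / 2 ^ N)) = p t := by
  induction N generalizing t with
  | zero => simp
  | succ N ih =>
    rw [iterate_succ_apply, pow_succ, ← div_div, map_leastPreimage_half hf hfdeg hsemi hp, ih]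

end Dynamics

theorem injective_of_monotone_lift {α : AddCircle (1 : ℝ) → AddCircle (1 : ℝ)} {α' : ℝ → ℝ}
    (hαlift : ∀ x : ℝ, α x = α' x) (hαdeg : ∀ x, α' (x + 1) = α' x + 1)
    (hlight : ∀ θ, IsTotallyDisconnected (α ⁻¹' {θ})) (hmono : Monotone α') : Injective α := by
  have coe_eq_of_apply_eq {a b : ℝ} (hab : a ≤ b) (heq : α' a = α' b) :
      (a : AddCircle (1 : ℝ)) = b := by
    have hconst : ∀ x ∈ Icc a b, α' x = α' a := fun x hx =>
      le_antisymm (heq ▸ hmono hx.2) (hmono hx.1)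
    refine hlight (α' a) (((↑) : ℝ → AddCircle (1 : ℝ)) '' Icc a b) ?_
      (isPreconnected_Icc.image _ (AddCircle.continuous_mk' 1).continuousOn)
      (mem_image_of_mem _ ⟨le_rfl, hab⟩) (mem_image_of_mem _ ⟨hab, le_rfl⟩)
    rintro _ ⟨x, hx, rfl⟩
    simp [hαlift, hconst x hx]
  intro θ₁ θ₂ h
  induction θ₁ using QuotientAddGroup.induction_on with | H x₁ => ?_
  induction θ₂ using QuotientAddGroup.induction_on with | H x₂ => ?_
  obtain ⟨m, hm⟩ : ∃ m : ℤ, m = α' x₁ - α' x₂ := by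
    have : ((α' x₁ - α' x₂ : ℝ) : AddCircle (1 : ℝ)) = 0 := by
      rw [AddCircle.coe_sub, ← hαlift, ← hαlift]; exact sub_eq_zero.2 h
    simpa using (AddCircle.coe_eq_zero_iff 1).1 this
  have hval : α' (x₂ + m) = α' x₁ := by
    rw [map_add_intCast_of_map_add_one hαdeg, hm]; ring
  have hcoe : ((x₂ + m : ℝ) : AddCircle (1 : ℝ)) = x₂ := by simp
  rcases le_total x₁ (x₂ + m) with hle | hle
  · exact (coe_eq_of_apply_eq hle hval.symm).trans hcoe
  · exact (coe_eq_of_apply_eq hle hval).symm.trans hcoe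

def IsFold (f p : ℝ → ℝ) (N : ℕ) (K : ℤ) (x : ℝ) : Prop :=
  p ((K : ℝ) / 2 ^ N) < x ∧ x < p (((K : ℝ) + 1) / 2 ^ N) ∧ f^[N] x = (K : ℝ) - 1

theorem IsFold.sub_mul {f a p : ℝ → ℝ} (hfdeg : ∀ x, f (x + 1) = f x + 2)
    (hdeg : ∀ x, a (x + 1) = a x + 1) (hp : ∀ r, IsLeast {x | a x = r} (p r))
    {N : ℕ} {K : ℤ} {x : ℝ} (h : IsFold f p N K x) (m : ℤ) :
    IsFold f p N (K - 2 ^ N * m) (x - m) := by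
  have hpshift (r : ℝ) : p (r - m) = p r - m := by
    simpa [sub_eq_add_neg] using leastPreimage_add_intCast hdeg hp r (-m)
  have hfshift : f^[N] (x - m) = f^[N] x - 2 ^ N * m := by
    have := map_add_intCast_of_map_add_one
      (iterate_map_add_one (d := 2) (by exact_mod_cast hfdeg) N) (-m) x
    push_cast at this
    rw [sub_eq_add_neg, this]; ring
  have hdiv (r : ℝ) : (r - 2 ^ N * m) / 2 ^ N = r / 2 ^ N - m := by field_simp
  obtain ⟨hl, hr, hval⟩ := h
  refine ⟨?_, ?_, ?_⟩
  · push_cast; rw [hdiv, hpshift]; linarith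
  · push_cast; rw [sub_add_eq_add_sub, hdiv, hpshift]; linarith
  · push_cast; rw [hfshift, hval]; ring

theorem exists_isFold_of_not_monotone {g' α' p : ℝ → ℝ} (hg' : Continuous g')
    (hgdeg : ∀ x, g' (x + 1) = g' x + 2) (hα' : Continuous α')
    (hαdeg : ∀ x, α' (x + 1) = α' x + 1) (hsemi' : ∀ x, α' (g' x) = 2 * α' x)
    (hp : ∀ r, IsLeast {x | α' x = r} (p r)) (hnorm : p 0 = 0) (hmono : ¬ Monotone α') :
    ∃ N K x, IsFold g' p N K x := by
  obtain ⟨C, hC⟩ := exists_abs_sub_mul_le_of_map_add_one hα' hαdeg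
  obtain ⟨u, v, huv, hvu⟩ : ∃ u v, u ≤ v ∧ α' v < α' u := by
    simpa [Monotone] using hmono
  obtain ⟨N, hN⟩ : ∃ N : ℕ, (2 + C) / (α' u - α' v) < 2 ^ N :=
    pow_unbounded_of_one_lt _ one_lt_two
  rw [div_lt_iff₀ (by linarith), mul_sub] at hN
  set j₀ := ⌊2 ^ N * α' u⌋
  have hj₀ : p (j₀ / 2 ^ N) ≤ u := leastPreimage_le_of_le hα' hαdeg hp <| by
    rw [div_le_iff₀ (by positivity), mul_comm]; exact Int.floor_le _
  obtain ⟨K, hKv, hKmax⟩ :=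
    exists_greatest_leastPreimage_dyadic_le hα' hαdeg hp N (hj₀.trans huv)
  have hvK : v < p ((K + 1) / 2 ^ N) := by
    by_contra! h
    have := hKmax (K + 1) (by push_cast; exact h)
    omega
  have hK : (2 : ℝ) ^ N * α' u - 1 < K :=
    (Int.sub_one_lt_floor _).trans_le (Int.cast_le.2 (hKmax j₀ (hj₀.trans huv)))
  have hgK : g'^[N] (p (K / 2 ^ N)) = K := by
    rw [iterate_leastPreimage_div_two_pow hg' hgdeg hsemi' hp,
      leastPreimage_intCast hαdeg hp hnorm]
  have hgv : g'^[N] v < K - 1 := by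
    have := (abs_le.1 (hC (g'^[N] v))).1
    rw [apply_iterate_eq_pow_mul hsemi' N v, one_mul] at this
    linarith
  obtain ⟨x, hx, hgx⟩ := intermediate_value_Icc' hKv (hg'.iterate N).continuousOn
    ⟨hgv.le, by linarith⟩
  refine ⟨N, K, x, lt_of_le_of_ne hx.1 ?_, hx.2.trans_lt hvK, hgx⟩
  rintro rfl
  linarith

theorem stmt16_general
    (g' : ℝ → ℝ) (hg' : Continuous g')
    (hgdeg : ∀ x : ℝ, g' (x + 1) = g' x + 2)
    (α : AddCircle (1 : ℝ) → AddCircle (1 : ℝ))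
    (α' : ℝ → ℝ) (hα' : Continuous α')
    (hαlift : ∀ x : ℝ, α (x : AddCircle (1 : ℝ)) = ((α' x : ℝ) : AddCircle (1 : ℝ)))
    (hαdeg : ∀ x : ℝ, α' (x + 1) = α' x + 1)
    (hsemi' : ∀ x : ℝ, α' (g' x) = 2 * α' x)
    (hlight : ∀ θ : AddCircle (1 : ℝ), IsTotallyDisconnected (α ⁻¹' {θ}))
    (hnotinj : ¬ Function.Injective α)
    (p : ℝ → ℝ) (hp : ∀ r : ℝ, IsLeast {x : ℝ | α' x = r} (p r))
    (hnorm : p 0 = 0) :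
    ∃ (N : ℕ) (K : ℤ) (xh : ℝ), 0 ≤ K ∧ K < 2 ^ N ∧
      p ((K : ℝ) / 2 ^ N) < xh ∧ xh < p (((K : ℝ) + 1) / 2 ^ N) ∧
      g'^[N] xh = (K : ℝ) - 1 := by
  have hmono : ¬ Monotone α' := fun h =>
    hnotinj (injective_of_monotone_lift hαlift hαdeg hlight h)
  obtain ⟨N, K, x, hfold⟩ :=
    exists_isFold_of_not_monotone hg' hgdeg hα' hαdeg hsemi' hp hnorm hmono
  have hpow : (0 : ℤ) < 2 ^ N := by positivity
  refine ⟨N, K % 2 ^ N, x - ↑(K / 2 ^ N : ℤ), Int.emod_nonneg K hpow.ne',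
    Int.emod_lt_of_pos K hpow, ?_⟩
  rw [Int.emod_def]
  exact hfold.sub_mul hgdeg hαdeg hp _

/-- The fold lemma: if the semiconjugacy `α` of a degree-two circle map is light but not
injective, normalized so `p 0 = 0`, then there are `N`, `K` with `0 ≤ K < 2^N` and a
point `xh` strictly between `p (K/2^N)` and `p ((K+1)/2^N)` with `g̃^N(xh) = K - 1`. -/
theorem stmt16
    (g : AddCircle (1 : ℝ) → AddCircle (1 : ℝ)) (hg : Continuous g)
    (g' : ℝ → ℝ) (hg' : Continuous g')
    (hglift : ∀ x : ℝ, g (x : AddCircle (1 : ℝ)) = ((g' x : ℝ) : AddCircle (1 : ℝ)))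
    (hgdeg : ∀ x : ℝ, g' (x + 1) = g' x + 2)
    (α : AddCircle (1 : ℝ) → AddCircle (1 : ℝ)) (hα : Continuous α)
    (α' : ℝ → ℝ) (hα' : Continuous α')
    (hαlift : ∀ x : ℝ, α (x : AddCircle (1 : ℝ)) = ((α' x : ℝ) : AddCircle (1 : ℝ)))
    (hαdeg : ∀ x : ℝ, α' (x + 1) = α' x + 1)
    (hsemi : ∀ θ, α (g θ) = α θ + α θ)
    (hsemi' : ∀ x : ℝ, α' (g' x) = 2 * α' x)
    (hlight : ∀ θ : AddCircle (1 : ℝ), IsTotallyDisconnected (α ⁻¹' {θ}))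
    (hnotinj : ¬ Function.Injective α)
    (p : ℝ → ℝ) (hp : ∀ r : ℝ, IsLeast {x : ℝ | α' x = r} (p r))
    (hnorm : p 0 = 0) :
    ∃ (N : ℕ) (K : ℤ) (xh : ℝ), 0 ≤ K ∧ K < 2 ^ N ∧
      p ((K : ℝ) / 2 ^ N) < xh ∧ xh < p (((K : ℝ) + 1) / 2 ^ N) ∧
      g'^[N] xh = (K : ℝ) - 1 :=
  stmt16_general g' hg' hgdeg α α' hα' hαlift hαdeg hsemi' hlight hnotinj p hp hnorm
end

section
/- Let g be a continuous degree-two circle map with light, non-injective semiconjugacy α to the doubling map. Then the topological entropy of g satisfies h_top(g) ≥ log(2^N + 2)/N for some N ≥ 1; in particular h_top(g) > log 2. -/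
/-!
If `α` is light and not injective, its degree-one lift `α'` rises by more than `1` over some
interval `[a, b]` of length `< 1`. Since `α` semiconjugates `g^N` to `θ ↦ 2^N θ`, the lift of
`g^N` then rises by at least `2^N + 4` over `[a, b]`, so `[a, b]` contains `2^N + 2` compact
pieces mapped onto distinct integer translates of `[a, b]`. On the circle these pieces are
disjoint and each covers all of them under `g^N`: a `(2^N + 2)`-fold horseshoe, whence
`N h_top(g) ≥ log (2^N + 2) > N log 2`.
-/

open Set Function Filter Uniformity Dynamics SetRel

theorem PreconnectedSpace.eq_of_forall_exists_intCast {X : Type*} [TopologicalSpace X]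
    [PreconnectedSpace X] {f : X → ℝ} (hf : Continuous f) (hint : ∀ x, ∃ n : ℤ, f x = n)
    (x y : X) : f x = f y := by
  choose F hF using hint
  have hFf : ((↑) : ℤ → ℝ) ∘ F = f := funext fun x => (hF x).symm
  have hFc : Continuous F := by
    rw [Int.isClosedEmbedding_coe_real.continuous_iff, hFf]; exact hf
  rw [hF x, hF y, PreconnectedSpace.constant ‹_› hFc]

section Horseshoe

variable {X ι : Type*}

theorem exists_forall_le_iterate_mem_of_subset_image (f : X → X) {A : ι → Set X}
    (hne : ∀ i, (A i).Nonempty) (hcover : ∀ i j, A j ⊆ f '' A i) (w : ℕ → ι) (n : ℕ) :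
    ∃ x, ∀ j ≤ n, f^[j] x ∈ A (w j) := by
  induction n generalizing w with
  | zero =>
    obtain ⟨x, hx⟩ := hne (w 0)
    exact ⟨x, fun j hj => by rwa [Nat.le_zero.1 hj]⟩
  | succ n ih =>
    obtain ⟨y, hy⟩ := ih (w ∘ Nat.succ)
    obtain ⟨x, hx, rfl⟩ := hcover (w 0) (w 1) (hy 0 n.zero_le)
    refine ⟨x, fun j hj => ?_⟩
    cases j with
    | zero => exact hx
    | succ j => rw [iterate_succ_apply]; exact hy j (by omega)

theorem exists_mem_uniformity_forall_notMem_of_pairwise_disjoint [UniformSpace X] [T2Space X]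
    [Finite ι] {A : ι → Set X} (hA : ∀ i, IsCompact (A i)) (hdisj : Pairwise (Disjoint on A)) :
    ∃ U ∈ 𝓤 X, ∀ i j, i ≠ j → ∀ x ∈ A i, ∀ y ∈ A j, (x, y) ∉ U := by
  have hpair : ∀ i j, ∃ V ∈ 𝓤 X, i ≠ j → ∀ x ∈ A i, ∀ y ∈ A j, (x, y) ∉ V := by
    intro i j
    by_cases hij : i = j
    · exact ⟨univ, univ_mem, fun h => (h hij).elim⟩
    obtain ⟨V, hV, hVdisj⟩ := (hdisj hij).exists_uniform_thickening (hA i) (hA j).isClosed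
    exact ⟨V, hV, fun _ x hx y hy hxy => hVdisj.ne_of_mem (mem_iUnion₂_of_mem hx hxy)
      (mem_iUnion₂_of_mem hy (refl_mem_uniformity hV)) rfl⟩
  choose V hV hsep using hpair
  exact ⟨⋂ i, ⋂ j, V i j, iInter_mem.2 fun i => iInter_mem.2 fun j => hV i j,
    fun i j hij x hx y hy hxy => hsep i j hij x hx y hy (mem_iInter.1 (mem_iInter.1 hxy i) j)⟩

theorem pow_card_le_netMaxcard [UniformSpace X] [Fintype ι] [Nonempty ι] (T : X → X) {N : ℕ}
    (hN : N ≠ 0) {A : ι → Set X} (hne : ∀ i, (A i).Nonempty)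
    (hcover : ∀ i j, A j ⊆ T^[N] '' A i) {V : SetRel X X} (hV : V ∈ 𝓤 X) [V.IsSymm]
    (hsep : ∀ i j, i ≠ j → ∀ x ∈ A i, ∀ y ∈ A j, (x, y) ∉ V ○ V) (n : ℕ) :
    (Fintype.card ι ^ n : ℕ∞) ≤ netMaxcard T univ V (N * n) := by
  classical
  have hword : ∀ w : Fin n → ι, ∃ x, ∀ j : Fin n, T^[N * j] x ∈ A (w j) := by
    intro w
    obtain ⟨x, hx⟩ := exists_forall_le_iterate_mem_of_subset_image (T^[N]) hne hcover
      (fun j => if h : j < n then w ⟨j, h⟩ else Classical.arbitrary ι) n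
    exact ⟨x, fun j => by simpa [iterate_mul] using hx j j.2.le⟩
  choose x hx using hword
  have hfar : ∀ w w', w ≠ w' → (x w', x w) ∉ dynEntourage T (V ○ V) (N * n) := by
    intro w w' hww h
    obtain ⟨j, hj⟩ := Function.ne_iff.1 hww
    exact hsep _ _ (Ne.symm hj) _ (hx w' j) _ (hx w j)
      (mem_dynEntourage.1 h _ ((Nat.mul_lt_mul_left (Nat.pos_of_ne_zero hN)).2 j.2))
  have hinj : Injective x := by
    intro w w' h
    by_contra hww
    refine hfar w w' hww ?_
    rw [h, mem_dynEntourage]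
    exact fun k _ => ⟨_, refl_mem_uniformity hV, refl_mem_uniformity hV⟩
  have hnet : IsDynNetIn T univ V (N * n) (Finset.univ.image x : Set X) := by
    refine ⟨subset_univ _, ?_⟩
    simp only [Finset.coe_image, Finset.coe_univ, image_univ]
    rintro _ ⟨w, rfl⟩ _ ⟨w', rfl⟩ hww
    exact not_not.1 fun h => hfar w w' (fun e => hww (e ▸ rfl))
      (mem_ball_dynEntourage_comp T _ _ _ (not_disjoint_iff_nonempty_inter.1 h))
  calc (Fintype.card ι ^ n : ℕ∞) = (Finset.univ.image x).card := by
        rw [Finset.card_image_of_injective _ hinj]; simp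
    _ ≤ _ := hnet.card_le_netMaxcard

theorem log_card_le_mul_coverEntropy [UniformSpace X] [T2Space X] [Fintype ι] [Nonempty ι]
    (T : X → X) {N : ℕ} (hN : N ≠ 0) {A : ι → Set X} (hA : ∀ i, IsCompact (A i))
    (hdisj : Pairwise (Disjoint on A)) (hne : ∀ i, (A i).Nonempty)
    (hcover : ∀ i j, A j ⊆ T^[N] '' A i) :
    (Real.log (Fintype.card ι) : EReal) ≤ N * coverEntropy T univ := by
  obtain ⟨U, hU, hsep⟩ := exists_mem_uniformity_forall_notMem_of_pairwise_disjoint hA hdisj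
  obtain ⟨V, hV, _, hVU⟩ := comp_symm_mem_uniformity_sets hU
  have hpow := pow_card_le_netMaxcard T hN hne hcover hV
    (fun i j hij x hx y hy h => hsep i j hij x hx y hy (hVU h))
  calc (Real.log (Fintype.card ι) : EReal)
      = ExpGrowth.expGrowthSup fun n => (Fintype.card ι : ENNReal) ^ n := by
        rw [ExpGrowth.expGrowthSup_pow, ENNReal.log_pos_real (by simp) (by simp)]
        simp
    _ ≤ ExpGrowth.expGrowthSup fun n => (netMaxcard T univ V (N * n) : ENNReal) :=
        ExpGrowth.expGrowthSup_monotone fun n => by simpa using ENat.toENNReal_le.2 (hpow n)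
    _ = N * netEntropyEntourage T univ V :=
        (ENat.toENNReal_mono.comp (netMaxcard_monotone_time T univ V)).expGrowthSup_comp_mul hN
    _ ≤ N * coverEntropy T univ := by
        gcongr
        exact netEntropyEntourage_le_coverEntropy T univ hV

end Horseshoe

local notation "𝕋" => AddCircle (1 : ℝ)

theorem AddCircle.coe_eq_coe_iff_exists_int {x y : ℝ} : (x : 𝕋) = y ↔ ∃ n : ℤ, x - y = n := by
  rw [← sub_eq_zero, ← AddCircle.coe_sub, AddCircle.coe_eq_zero_iff]
  simp [eq_comm]

theorem AddCircle.coe_add_intCast (x : ℝ) (m : ℤ) : ((x + m : ℝ) : 𝕋) = x :=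
  AddCircle.coe_eq_coe_iff_exists_int.2 ⟨m, by ring⟩

theorem log_card_le_mul_coverEntropy_of_lift {T : 𝕋 → 𝕋} {N : ℕ} (hN : N ≠ 0) {H : ℝ → ℝ}
    (hH : Continuous H) (hlift : ∀ x : ℝ, T^[N] x = H x) {a b : ℝ} (hab : a ≤ b)
    (hb : b < a + 1) {S : Finset ℤ} (hS : S.Nonempty)
    (hwin : ∀ m ∈ S, H a ≤ a + m ∧ b + m ≤ H b) :
    (Real.log S.card : EReal) ≤ N * coverEntropy T univ := by
  -- The pieces `K m` stay disjoint on the circle: `Icc a b` embeds into it, and their images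
  -- under `H` lie in the windows `Icc (a + m) (b + m)`, which are disjoint since `b - a < 1`.
  set K : ℤ → Set ℝ := fun m => Icc a b ∩ H ⁻¹' Icc (a + m) (b + m)
  have hK_image : ∀ m ∈ S, Icc (a + m) (b + m) ⊆ H '' K m := by
    intro m hm y hy
    obtain ⟨x, hx, rfl⟩ := intermediate_value_Icc hab hH.continuousOn
      ⟨(hwin m hm).1.trans hy.1, hy.2.trans (hwin m hm).2⟩
    exact ⟨x, ⟨hx, hy⟩, rfl⟩
  have hinj : InjOn ((↑) : ℝ → 𝕋) (Icc a b) := fun x hx y hy h =>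
    (AddCircle.coe_eq_coe_iff_of_mem_Ico ⟨hx.1, hx.2.trans_lt hb⟩ ⟨hy.1, hy.2.trans_lt hb⟩).1 h
  have : Nonempty S := hS.to_subtype
  have := log_card_le_mul_coverEntropy T hN (A := fun m : S => ((↑) : ℝ → 𝕋) '' K m)
    (fun m => ((isCompact_Icc.inter_right (isClosed_Icc.preimage hH)).image
      (AddCircle.continuous_mk' 1)))
    ?_ ?_ ?_
  · simpa using this
  · rintro ⟨m, _⟩ ⟨m', _⟩ hmm'
    refine disjoint_left.2 ?_
    rintro _ ⟨x, hx, rfl⟩ ⟨y, hy, hxy⟩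
    obtain rfl := hinj hy.1 hx.1 hxy
    have h₁ : m - m' < 1 := by
      have := hx.2.1; have := hy.2.2; have := hy.1.1; have := hy.1.2
      exact_mod_cast (by push_cast; linarith : ((m - m' : ℤ) : ℝ) < 1)
    have h₂ : m' - m < 1 := by
      have := hx.2.2; have := hy.2.1; have := hy.1.1; have := hy.1.2
      exact_mod_cast (by push_cast; linarith : ((m' - m : ℤ) : ℝ) < 1)
    exact hmm' (Subtype.ext (show m = m' by omega))
  · exact fun m => ((nonempty_Icc.2 (by linarith)).mono (hK_image m m.2)).of_image.image _
  · rintro ⟨m, hm⟩ ⟨m', _⟩ _ ⟨y, hy, rfl⟩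
    obtain ⟨x, hx, hxy⟩ := hK_image m hm
      (show y + m ∈ Icc (a + m) (b + m) from ⟨by linarith [hy.1.1], by linarith [hy.1.2]⟩)
    exact ⟨x, ⟨x, hx, rfl⟩, by rw [hlift, hxy, AddCircle.coe_add_intCast]⟩

theorem exists_lift_add_one_lt_of_not_injective {α : 𝕋 → 𝕋} {α' : ℝ → ℝ}
    (hαlift : ∀ x : ℝ, α x = α' x) (hαdeg : ∀ x, α' (x + 1) = α' x + 1)
    (hlight : ∀ θ, IsTotallyDisconnected (α ⁻¹' {θ})) (hnotinj : ¬ Injective α) :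
    ∃ a b, a < b ∧ b < a + 1 ∧ α' a + 1 < α' b := by
  -- Otherwise `α'` is monotone on intervals of length `< 1`, so `α x = α y` forces `α'` to be
  -- constant on an arc joining `x` and `y`; lightness collapses that arc to a point.
  by_contra! hsmall
  have hmono : ∀ u v, u ≤ v → v < u + 1 → α' u ≤ α' v := by
    intro u v huv hvu
    rcases huv.eq_or_lt with rfl | huv
    · exact le_rfl
    · linarith [hαdeg u, hsmall v (u + 1) hvu (by linarith)]
  have hflat : ∀ u v, u ≤ v → v < u + 1 → α' u = α' v → (u : 𝕋) = v := by
    intro u v huv hvu heq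
    refine hlight (α u) (((↑) : ℝ → 𝕋) '' Icc u v) ?_
      (isPreconnected_Icc.image _ (AddCircle.continuous_mk' 1).continuousOn)
      (mem_image_of_mem _ ⟨le_rfl, huv⟩) (mem_image_of_mem _ ⟨huv, le_rfl⟩)
    rintro _ ⟨z, hz, rfl⟩
    rw [Set.mem_preimage, mem_singleton_iff, hαlift, hαlift]
    congr 1
    exact le_antisymm (heq ▸ hmono z v hz.2 (by linarith [hz.1]))
      (hmono u z hz.1 (by linarith [hz.2]))
  refine hnotinj fun θ₁ θ₂ h => ?_
  obtain ⟨x, rfl⟩ := QuotientAddGroup.mk_surjective θ₁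
  obtain ⟨y, hy, rfl⟩ : ∃ y ∈ Ico x (x + 1), (y : 𝕋) = θ₂ :=
    ⟨_, (AddCircle.equivIco 1 x θ₂).2, AddCircle.coe_equivIco⟩
  rw [hαlift, hαlift, AddCircle.coe_eq_coe_iff_exists_int] at h
  obtain ⟨n, hn⟩ := h
  rcases hy.1.eq_or_lt with rfl | hxy
  · rfl
  have h₀ := hmono x y hy.1 hy.2
  have h₁ := hmono y (x + 1) (by linarith [hy.2]) (by linarith)
  rw [hαdeg] at h₁
  have : n = 0 ∨ n = -1 := by
    have : -1 ≤ n := by exact_mod_cast (by linarith : (-1 : ℝ) ≤ n)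
    have : n ≤ 0 := by exact_mod_cast (by linarith : (n : ℝ) ≤ 0)
    omega
  rcases this with rfl | rfl
  · exact hflat x y hy.1 hy.2 (by push_cast at hn; linarith)
  · rw [← AddCircle.coe_add_period 1 x]
    exact (hflat y (x + 1) (by linarith [hy.2]) (by linarith)
      (by push_cast at hn; linarith [hαdeg x])).symm

theorem lift_comp_sub_lift_comp_eq_two_mul {g α : 𝕋 → 𝕋} {g' α' : ℝ → ℝ} (hg' : Continuous g')
    (hglift : ∀ x : ℝ, g x = g' x) (hα' : Continuous α') (hαlift : ∀ x : ℝ, α x = α' x)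
    (hsemi : ∀ θ, α (g θ) = α θ + α θ) (x y : ℝ) :
    α' (g' y) - α' (g' x) = 2 * (α' y - α' x) := by
  have hint : ∀ z, ∃ n : ℤ, α' (g' z) - 2 * α' z = n := fun z => by
    have h := hsemi z
    rw [hglift, hαlift, hαlift, ← AddCircle.coe_add, AddCircle.coe_eq_coe_iff_exists_int] at h
    obtain ⟨n, hn⟩ := h
    exact ⟨n, by linarith⟩
  have := PreconnectedSpace.eq_of_forall_exists_intCast (by fun_prop) hint x y
  linarith

theorem lift_iterate_sub_lift_iterate_eq_pow_mul {g' α' : ℝ → ℝ} {c : ℝ}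
    (hdiff : ∀ x y, α' (g' y) - α' (g' x) = c * (α' y - α' x)) (n : ℕ) (x y : ℝ) :
    α' (g'^[n] y) - α' (g'^[n] x) = c ^ n * (α' y - α' x) := by
  induction n with
  | zero => simp
  | succ n ih => rw [iterate_succ_apply', iterate_succ_apply', hdiff, ih, pow_succ]; ring

theorem exists_abs_lift_sub_le {α' : ℝ → ℝ} (hα' : Continuous α')
    (hαdeg : ∀ x, α' (x + 1) = α' x + 1) : ∃ C, ∀ x, |α' x - x| ≤ C := by
  have hper : Periodic (fun x => α' x - x) 1 := fun x => by simp only [hαdeg]; ring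
  obtain ⟨C, hC⟩ := (Metric.isBounded_iff_subset_closedBall 0).1
    (hper.isBounded_of_continuous one_ne_zero (hα'.sub continuous_id))
  exact ⟨C, fun x => by simpa using hC (mem_range_self x)⟩

theorem sub_sub_one_lt_card_Icc_ceil_floor (u v : ℝ) :
    v - u - 1 < (Finset.Icc ⌈u⌉ ⌊v⌋).card := by
  rw [Int.card_Icc]
  calc v - u - 1 < ⌊v⌋ + 1 - ⌈u⌉ := by linarith [Int.lt_floor_add_one v, Int.ceil_lt_add_one u]
    _ ≤ ((⌊v⌋ + 1 - ⌈u⌉).toNat : ℤ) := by exact_mod_cast Int.self_le_toNat _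

theorem exists_log_two_pow_add_two_le_mul_coverEntropy {g : 𝕋 → 𝕋} {g' α' : ℝ → ℝ}
    (hg' : Continuous g') (hglift : ∀ x : ℝ, g x = g' x) (hα' : Continuous α')
    (hαdeg : ∀ x, α' (x + 1) = α' x + 1)
    (hdiff : ∀ x y, α' (g' y) - α' (g' x) = 2 * (α' y - α' x)) {a b : ℝ} (hab : a ≤ b)
    (hb : b < a + 1) (hjump : α' a + 1 < α' b) :
    ∃ N : ℕ, N ≠ 0 ∧ (Real.log (2 ^ N + 2) : EReal) ≤ N * coverEntropy g univ := by
  obtain ⟨C, hC⟩ := exists_abs_lift_sub_le hα' hαdeg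
  obtain ⟨N, hN⟩ := pow_unbounded_of_one_lt ((2 * C + 4) / (α' b - α' a - 1)) one_lt_two
  set H := g'^[N + 1]
  have hgrowth : (2 : ℝ) ^ (N + 1) + 4 ≤ H b - H a := by
    have hH := lift_iterate_sub_lift_iterate_eq_pow_mul hdiff (N + 1) a b
    have := (div_lt_iff₀ (by linarith)).1 hN
    have := abs_le.1 (hC (H a)); have := abs_le.1 (hC (H b))
    rw [pow_succ] at hH ⊢
    nlinarith
  set S := Finset.Icc ⌈H a - a⌉ ⌊H b - b⌋
  have hcard : 2 ^ (N + 1) + 2 ≤ S.card := by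
    have := sub_sub_one_lt_card_Icc_ceil_floor (H a - a) (H b - b)
    exact_mod_cast (by linarith : (2 : ℝ) ^ (N + 1) + 1 < S.card)
  have hS : S.Nonempty := Finset.card_pos.1 (lt_of_lt_of_le (by positivity) hcard)
  have hwin : ∀ m ∈ S, H a ≤ a + m ∧ b + m ≤ H b := fun m hm => by
    obtain ⟨h₁, h₂⟩ := Finset.mem_Icc.1 hm
    exact ⟨by linarith [Int.ceil_le.1 h₁], by linarith [Int.le_floor.1 h₂]⟩
  refine ⟨N + 1, N.succ_ne_zero, le_trans ?_ (log_card_le_mul_coverEntropy_of_lift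
    N.succ_ne_zero (hg'.iterate _) (fun x => ?_) hab hb hS hwin)⟩
  · exact EReal.coe_le_coe_iff.2 (Real.log_le_log (by positivity) (by exact_mod_cast hcard))
  · exact ((Semiconj.iterate_right (fun y => (hglift y).symm) (N + 1)) x).symm

theorem stmt17_general
    (g : AddCircle (1 : ℝ) → AddCircle (1 : ℝ))
    (g' : ℝ → ℝ) (hg' : Continuous g')
    (hglift : ∀ x : ℝ, g (x : AddCircle (1 : ℝ)) = ((g' x : ℝ) : AddCircle (1 : ℝ)))
    (α : AddCircle (1 : ℝ) → AddCircle (1 : ℝ))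
    (α' : ℝ → ℝ) (hα' : Continuous α')
    (hαlift : ∀ x : ℝ, α (x : AddCircle (1 : ℝ)) = ((α' x : ℝ) : AddCircle (1 : ℝ)))
    (hαdeg : ∀ x : ℝ, α' (x + 1) = α' x + 1)
    (hsemi : ∀ θ, α (g θ) = α θ + α θ)
    (hlight : ∀ θ : AddCircle (1 : ℝ), IsTotallyDisconnected (α ⁻¹' {θ}))
    (hnotinj : ¬ Function.Injective α) :
    (∃ N : ℕ, 1 ≤ N ∧
      (Real.log (2 ^ N + 2) / N : EReal) ≤ Dynamics.coverEntropy g Set.univ) ∧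
    (Real.log 2 : EReal) < Dynamics.coverEntropy g Set.univ := by
  obtain ⟨a, b, hab, hb, hjump⟩ :=
    exists_lift_add_one_lt_of_not_injective hαlift hαdeg hlight hnotinj
  obtain ⟨N, hN, hlog⟩ := exists_log_two_pow_add_two_le_mul_coverEntropy hg' hglift hα' hαdeg
    (lift_comp_sub_lift_comp_eq_two_mul hg' hglift hα' hαlift hsemi) hab.le hb hjump
  have hNpos : 0 < N := Nat.pos_of_ne_zero hN
  have hdiv : (Real.log (2 ^ N + 2) / N : EReal) ≤ coverEntropy g univ :=
    (EReal.div_le_iff_le_mul (by exact_mod_cast hNpos) (EReal.natCast_ne_top N)).2 hlog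
  refine ⟨⟨N, hNpos, hdiv⟩, lt_of_lt_of_le ?_ hdiv⟩
  have : Real.log 2 < Real.log (2 ^ N + 2) / N := by
    rw [lt_div_iff₀ (by positivity), mul_comm, ← Real.log_pow]
    exact Real.log_lt_log (by positivity) (by linarith)
  rw [← EReal.coe_coe_eq_natCast, ← EReal.coe_div]
  exact_mod_cast this

/-- Entropy: if the semiconjugacy `α` of a degree-two circle map `g` is light and not
injective, then `h_top(g) ≥ log(2^N + 2)/N` for some `N ≥ 1`; in particular
`h_top(g) > log 2`. -/
theorem stmt17
    (g : AddCircle (1 : ℝ) → AddCircle (1 : ℝ)) (hg : Continuous g)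
    (g' : ℝ → ℝ) (hg' : Continuous g')
    (hglift : ∀ x : ℝ, g (x : AddCircle (1 : ℝ)) = ((g' x : ℝ) : AddCircle (1 : ℝ)))
    (hgdeg : ∀ x : ℝ, g' (x + 1) = g' x + 2)
    (α : AddCircle (1 : ℝ) → AddCircle (1 : ℝ)) (hα : Continuous α)
    (α' : ℝ → ℝ) (hα' : Continuous α')
    (hαlift : ∀ x : ℝ, α (x : AddCircle (1 : ℝ)) = ((α' x : ℝ) : AddCircle (1 : ℝ)))
    (hαdeg : ∀ x : ℝ, α' (x + 1) = α' x + 1)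
    (hsemi : ∀ θ, α (g θ) = α θ + α θ)
    (hlight : ∀ θ : AddCircle (1 : ℝ), IsTotallyDisconnected (α ⁻¹' {θ}))
    (hnotinj : ¬ Function.Injective α) :
    (∃ N : ℕ, 1 ≤ N ∧
      (Real.log (2 ^ N + 2) / N : EReal) ≤ Dynamics.coverEntropy g Set.univ) ∧
    (Real.log 2 : EReal) < Dynamics.coverEntropy g Set.univ :=
  stmt17_general g g' hg' hglift α α' hα' hαlift hαdeg hsemi hlight hnotinj
end

section
/- Let g be a continuous degree-two circle map with light, non-injective semiconjugacy α and lift α̃. Then for every nontrivial compact interval J ⊆ ℝ, the restriction α̃|_J has unbounded variation; in particular there exist N ∈ ℕ so that var(α̃, [0,1]) ≥ (2^N + 2)^j / 2^{Nj} for all j ≥ 1. -/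
/-!
The lift `α̃` is a degree-one map, so `α̃ - id` is periodic and `|α̃ x - x| ≤ C`; with
`α̃ ∘ g̃^N = 2^N α̃` this puts `g̃^N` within `C` of `2^N α̃`. Lightness forbids `α̃` to be constant
on an interval, and then non-injectivity of `α` forces `α̃` to decrease somewhere: `α̃ q < α̃ p` with
`p < q`. An integer translate of this pair lies in every window `[x, x + L]`, on which `g̃^N` goes
up, down and up again, covering at least `2^N + 1` windows of length `L` in total. As a
continuous map covering a window carries at least the variation of `α̃` over that window, the least
variation `W` of `α̃` over a window of length `L` satisfies `(2^N + 1) W ≤ 2^N W`, so `W = ∞`.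
Finally, `α̃` is nonconstant on every interval `J`, so some `g̃^K` stretches `J` over a full window
and `2^K var(α̃, J) ≥ W = ∞`.
-/

open Set Function
open scoped ENNReal

theorem exists_monotoneOn_rightInvOn_Icc {f : ℝ → ℝ} {a b : ℝ} (hab : a ≤ b)
    (hf : ContinuousOn f (Icc a b)) :
    ∃ φ : ℝ → ℝ, MonotoneOn φ (Icc (f a) (f b)) ∧ MapsTo φ (Icc (f a) (f b)) (Icc a b) ∧
      RightInvOn φ f (Icc (f a) (f b)) := by
  -- `φ y` is the first time at which `f` reaches the level `y`
  set S : ℝ → Set ℝ := fun y => Icc a b ∩ f ⁻¹' Ici y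
  have hSbdd : ∀ y, BddBelow (S y) := fun y => ⟨a, fun r hr => hr.1.1⟩
  have hSne : ∀ y ∈ Icc (f a) (f b), (S y).Nonempty := fun y hy => ⟨b, right_mem_Icc.2 hab, hy.2⟩
  have hSmem : ∀ y ∈ Icc (f a) (f b), sInf (S y) ∈ S y := fun y hy =>
    (hf.preimage_isClosed_of_isClosed isClosed_Icc isClosed_Ici).csInf_mem (hSne y hy) (hSbdd y)
  refine ⟨fun y => sInf (S y), fun y hy y' hy' hyy' => ?_, fun y hy => (hSmem y hy).1,
    fun y hy => ?_⟩
  · exact csInf_le_csInf (hSbdd y) (hSne y' hy') fun r hr => ⟨hr.1, hyy'.trans hr.2⟩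
  · obtain ⟨⟨hac, hcb⟩, hyc⟩ := hSmem y hy
    obtain ⟨c, hc, rfl⟩ := intermediate_value_Icc hac (hf.mono (Icc_subset_Icc le_rfl hcb))
      ⟨hy.1, hyc⟩
    exact congrArg f <|
      le_antisymm (csInf_le (hSbdd _) ⟨⟨hc.1, hc.2.trans hcb⟩, (le_refl (f c) : f c ∈ Ici (f c))⟩)
        hc.2

theorem AddCircle.coe_eq_coe_iff_exists_intCast {x y : ℝ} :
    (x : AddCircle (1 : ℝ)) = y ↔ ∃ k : ℤ, y = x + k := by
  rw [QuotientAddGroup.eq, AddSubgroup.mem_zmultiples_iff]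
  simp only [zsmul_eq_mul, mul_one]
  exact exists_congr fun k => by constructor <;> intro h <;> linarith

theorem add_one_le_floor_add_floor_add_floor {n : ℕ} {L a b c : ℝ} (hL : 0 < L)
    (h : (n + 3) * L ≤ a + b + c) : n + 1 ≤ ⌊a / L⌋₊ + ⌊b / L⌋₊ + ⌊c / L⌋₊ := by
  have hsum : (n : ℝ) + 3 ≤ a / L + b / L + c / L := by
    rwa [← add_div, ← add_div, le_div_iff₀ hL]
  have : (n : ℝ) < ⌊a / L⌋₊ + ⌊b / L⌋₊ + ⌊c / L⌋₊ := by
    linarith [Nat.sub_one_lt_floor (a / L), Nat.sub_one_lt_floor (b / L),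
      Nat.sub_one_lt_floor (c / L)]
  exact_mod_cast this

theorem exists_lt_natCast_pow_mul {d : ℕ} (hd : 1 < d) {δ : ℝ} (hδ : 0 < δ) (X : ℝ) :
    ∃ N : ℕ, X < ((d ^ N : ℕ) : ℝ) * δ := by
  obtain ⟨N, hN⟩ := pow_unbounded_of_one_lt (X / δ) (Nat.one_lt_cast.2 hd)
  exact ⟨N, by push_cast; rwa [div_lt_iff₀ hδ] at hN⟩

section Variation

variable {E : Type*} [PseudoEMetricSpace E]

theorem eVariationOn_Icc_le_comp (β : ℝ → E) {f : ℝ → ℝ} {a b : ℝ} (hab : a ≤ b)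
    (hf : ContinuousOn f (Icc a b)) :
    eVariationOn β (Icc (f a) (f b)) ≤ eVariationOn (β ∘ f) (Icc a b) := by
  obtain ⟨φ, hφ, hmaps, hinv⟩ := exists_monotoneOn_rightInvOn_Icc hab hf
  calc eVariationOn β (Icc (f a) (f b))
      = eVariationOn ((β ∘ f) ∘ φ) (Icc (f a) (f b)) :=
        eVariationOn.eq_of_eqOn fun y hy => by simp [hinv hy]
    _ ≤ eVariationOn (β ∘ f) (Icc a b) := eVariationOn.comp_le_of_monotoneOn _ φ hφ hmaps

theorem eVariationOn_Icc_add_Icc (f : ℝ → E) {a b c : ℝ} (hab : a ≤ b) (hbc : b ≤ c) :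
    eVariationOn f (Icc a b) + eVariationOn f (Icc b c) = eVariationOn f (Icc a c) := by
  simpa using eVariationOn.Icc_add_Icc f (s := univ) hab hbc (mem_univ b)

noncomputable def minWindowVariation (β : ℝ → E) (L : ℝ) : ℝ≥0∞ :=
  ⨅ y, eVariationOn β (Icc y (y + L))

theorem minWindowVariation_le (β : ℝ → E) (L y : ℝ) :
    minWindowVariation β L ≤ eVariationOn β (Icc y (y + L)) :=
  iInf_le _ y

theorem minWindowVariation_le_comp_neg (β : ℝ → E) (L : ℝ) :
    minWindowVariation β L ≤ minWindowVariation (β ∘ Neg.neg) L := by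
  refine le_iInf fun y => ?_
  rw [eVariationOn.comp_eq_of_antitoneOn β Neg.neg (fun _ _ _ _ h => neg_le_neg h),
    image_neg_Icc, show -y = -(y + L) + L by ring]
  exact minWindowVariation_le β L _

theorem natCast_mul_minWindowVariation_le_of_add_le (β : ℝ → E) {f : ℝ → ℝ} {L : ℝ}
    (hL : 0 ≤ L) (m : ℕ) {s t : ℝ} (hst : s ≤ t) (hf : ContinuousOn f (Icc s t))
    (hm : f s + m * L ≤ f t) :
    m * minWindowVariation β L ≤ eVariationOn (β ∘ f) (Icc s t) := by
  induction m generalizing s with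
  | zero => simp
  | succ m ih =>
    push_cast at hm
    have hL' : f s + L ≤ f t := by linarith [mul_nonneg m.cast_nonneg hL]
    obtain ⟨u, hu, hfu⟩ := intermediate_value_Icc hst hf ⟨by linarith, hL'⟩
    have first : minWindowVariation β L ≤ eVariationOn (β ∘ f) (Icc s u) := by
      calc minWindowVariation β L ≤ eVariationOn β (Icc (f s) (f s + L)) :=
            minWindowVariation_le β L (f s)
        _ ≤ eVariationOn (β ∘ f) (Icc s u) := by
          simpa only [hfu] using eVariationOn_Icc_le_comp β hu.1
            (hf.mono (Icc_subset_Icc le_rfl hu.2))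
    have rest : m * minWindowVariation β L ≤ eVariationOn (β ∘ f) (Icc u t) :=
      ih hu.2 (hf.mono (Icc_subset_Icc hu.1 le_rfl)) (by linarith)
    calc ((m + 1 : ℕ) : ℝ≥0∞) * minWindowVariation β L
        = minWindowVariation β L + m * minWindowVariation β L := by push_cast; ring
      _ ≤ eVariationOn (β ∘ f) (Icc s u) + eVariationOn (β ∘ f) (Icc u t) :=
          add_le_add first rest
      _ = eVariationOn (β ∘ f) (Icc s t) := eVariationOn_Icc_add_Icc _ hu.1 hu.2

theorem natCast_mul_minWindowVariation_le (β : ℝ → E) {f : ℝ → ℝ} {L : ℝ}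
    (hL : 0 ≤ L) (m : ℕ) {s t : ℝ} (hst : s ≤ t) (hf : ContinuousOn f (Icc s t))
    (hm : m * L ≤ |f t - f s|) :
    m * minWindowVariation β L ≤ eVariationOn (β ∘ f) (Icc s t) := by
  rcases le_total (f s) (f t) with h | h
  · rw [abs_of_nonneg (sub_nonneg.2 h)] at hm
    exact natCast_mul_minWindowVariation_le_of_add_le β hL m hst hf (by linarith)
  · rw [abs_of_nonpos (sub_nonpos.2 h)] at hm
    calc m * minWindowVariation β L ≤ m * minWindowVariation (β ∘ Neg.neg) L := by
          gcongr; exact minWindowVariation_le_comp_neg β L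
      _ ≤ eVariationOn ((β ∘ Neg.neg) ∘ (fun x => -f x)) (Icc s t) :=
          natCast_mul_minWindowVariation_le_of_add_le _ hL m hst hf.neg (by linarith)
      _ = eVariationOn (β ∘ f) (Icc s t) := by congr 1; ext x; simp

theorem floor_mul_minWindowVariation_le (β : ℝ → E) {f : ℝ → ℝ} {L : ℝ} (hL : 0 < L)
    {s t : ℝ} (hst : s ≤ t) (hf : ContinuousOn f (Icc s t)) :
    (⌊|f t - f s| / L⌋₊ : ℝ≥0∞) * minWindowVariation β L ≤ eVariationOn (β ∘ f) (Icc s t) :=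
  natCast_mul_minWindowVariation_le β hL.le _ hst hf <|
    (le_div_iff₀ hL).1 (Nat.floor_le (by positivity))

end Variation

section Semiconj

variable {β F : ℝ → ℝ} {n : ℕ} {C : ℝ}

theorem abs_sub_mul_le_of_semiconj (hC : ∀ x, |β x - x| ≤ C)
    (hβF : Semiconj β F ((n : ℝ) * ·)) (y : ℝ) : |F y - n * β y| ≤ C := by
  simpa [hβF y, abs_sub_comm] using hC (F y)

theorem eVariationOn_comp_le_of_semiconj (hβF : Semiconj β F ((n : ℝ) * ·)) (s : Set ℝ) :
    eVariationOn (β ∘ F) s ≤ n * eVariationOn β s := by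
  have hcomp : β ∘ F = ((n : ℝ) • ·) ∘ β := funext fun y => by simp [hβF y]
  simpa [hcomp] using
    (lipschitzWith_smul (n : ℝ)).lipschitzOnWith.comp_eVariationOn_le (mapsTo_univ β s)

theorem semiconj_iterate_natCast_pow (hβF : Semiconj β F ((n : ℝ) * ·)) (N : ℕ) :
    Semiconj β F^[N] (((n ^ N : ℕ) : ℝ) * ·) := by
  simpa [mul_left_iterate] using hβF.iterate_right N

end Semiconj

theorem exists_mem_Icc_ne_of_isTotallyDisconnected {α : AddCircle (1 : ℝ) → AddCircle (1 : ℝ)}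
    {β : ℝ → ℝ} (hlift : ∀ x : ℝ, α x = β x) (hlight : ∀ θ, IsTotallyDisconnected (α ⁻¹' {θ}))
    {s t : ℝ} (hst : s < t) :
    ∃ z ∈ Icc s t, β z ≠ β s := by
  by_contra! hconst
  set r := min t (s + 1 / 2)
  have hsr : s < r := lt_min hst (by linarith)
  have hr : r < s + 1 := (min_le_right _ _).trans_lt (by linarith)
  have hfiber : ((↑) : ℝ → AddCircle (1 : ℝ)) '' Icc s r ⊆ α ⁻¹' {(β s : AddCircle (1 : ℝ))} := by
    rintro _ ⟨z, hz, rfl⟩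
    simp [hlift, hconst z ⟨hz.1, hz.2.trans (min_le_left _ _)⟩]
  have hsub := hlight _ _ hfiber
    (isPreconnected_Icc.image _ (AddCircle.continuous_mk' 1).continuousOn)
    (mem_image_of_mem _ (left_mem_Icc.2 hsr.le)) (mem_image_of_mem _ (right_mem_Icc.2 hsr.le))
  exact hsr.ne ((AddCircle.coe_eq_coe_iff_of_mem_Ico ⟨le_rfl, by linarith⟩
    ⟨hsr.le, by linarith⟩).1 hsub)

def IsDegreeOneLift (β : ℝ → ℝ) : Prop :=
  ∀ x, β (x + 1) = β x + 1

namespace IsDegreeOneLift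

variable {β : ℝ → ℝ}

theorem periodic_sub (hβ : IsDegreeOneLift β) : Periodic (fun x => β x - x) 1 :=
  fun x => by simp only [hβ x]; ring

theorem map_add_intCast (hβ : IsDegreeOneLift β) (x : ℝ) (k : ℤ) : β (x + k) = β x + k := by
  have := hβ.periodic_sub.int_mul k x
  simp only [mul_one] at this
  linarith

theorem map_add_natCast (hβ : IsDegreeOneLift β) (x : ℝ) (k : ℕ) : β (x + k) = β x + k := by
  exact_mod_cast hβ.map_add_intCast x k

theorem exists_abs_sub_le (hβ : IsDegreeOneLift β) (hβc : Continuous β) :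
    ∃ C, ∀ x, |β x - x| ≤ C := by
  obtain ⟨C, hC⟩ := isBounded_iff_forall_norm_le.1
    (hβ.periodic_sub.isBounded_of_continuous one_ne_zero (hβc.sub continuous_id))
  exact ⟨C, fun x => hC _ (mem_range_self x)⟩

theorem natCast_le_minWindowVariation (hβ : IsDegreeOneLift β) (L : ℕ) :
    (L : ℝ≥0∞) ≤ minWindowVariation β L := by
  refine le_iInf fun y => ?_
  have hy : y ≤ y + L := le_add_of_nonneg_right L.cast_nonneg
  calc (L : ℝ≥0∞) = edist (β (y + L)) (β y) := by
        rw [hβ.map_add_natCast, edist_dist, Real.dist_eq, add_sub_cancel_left,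
          abs_of_nonneg L.cast_nonneg, ENNReal.ofReal_natCast]
    _ ≤ eVariationOn β (Icc y (y + L)) :=
        eVariationOn.edist_le β (right_mem_Icc.2 hy) (left_mem_Icc.2 hy)

section Circle

variable {α : AddCircle (1 : ℝ) → AddCircle (1 : ℝ)}

theorem injective_of_strictMono (hβ : IsDegreeOneLift β) (hlift : ∀ x : ℝ, α x = β x)
    (hmono : StrictMono β) : Injective α := by
  intro θ₁ θ₂ h
  obtain ⟨x, rfl⟩ := QuotientAddGroup.mk_surjective θ₁
  obtain ⟨y, rfl⟩ := QuotientAddGroup.mk_surjective θ₂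
  obtain ⟨k, hk⟩ := AddCircle.coe_eq_coe_iff_exists_intCast.1 <|
    (hlift x).symm.trans (h.trans (hlift y))
  -- the representative `y'` of `y` in `[x, x + 1)` has `β y' = β x + j` with `0 ≤ j < 1`
  set m := ⌊y - x⌋
  set y' := y + ((-m : ℤ) : ℝ)
  have hy' : x ≤ y' ∧ y' < x + 1 := by
    push_cast [y']
    constructor <;> linarith [Int.floor_le (y - x), Int.lt_floor_add_one (y - x)]
  have hβy' : β y' = β x + ((k - m : ℤ) : ℝ) := by
    rw [hβ.map_add_intCast, hk]; push_cast; ring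
  have hj : k - m = 0 := by
    have h0 := hmono.monotone hy'.1
    have h1 := hmono hy'.2
    rw [hβy'] at h0 h1
    rw [hβ] at h1
    have : (0 : ℤ) ≤ k - m := by exact_mod_cast (by linarith : (0 : ℝ) ≤ ((k - m : ℤ) : ℝ))
    have : k - m < 1 := by exact_mod_cast (by linarith : ((k - m : ℤ) : ℝ) < 1)
    omega
  have hxy' : y' = x := hmono.injective (by rw [hβy', hj, Int.cast_zero, add_zero])
  exact AddCircle.coe_eq_coe_iff_exists_intCast.2 ⟨m, by push_cast [y'] at hxy'; linarith⟩

theorem exists_lt_map_lt_of_not_injective (hβ : IsDegreeOneLift β)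
    (hlift : ∀ x : ℝ, α x = β x) (hlight : ∀ θ, IsTotallyDisconnected (α ⁻¹' {θ}))
    (hα : ¬ Injective α) : ∃ p q, p < q ∧ β q < β p := by
  by_contra! hlt
  have hmono : Monotone β := fun s t hst =>
    hst.eq_or_lt.elim (fun h => h ▸ le_rfl) (hlt s t)
  refine hα (hβ.injective_of_strictMono hlift fun s t hst => ?_)
  obtain ⟨z, hz, hne⟩ := exists_mem_Icc_ne_of_isTotallyDisconnected hlift hlight hst
  exact ((hmono hz.1).lt_of_ne hne.symm).trans_le (hmono hz.2)

end Circle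

variable {F : ℝ → ℝ} {n : ℕ} {C : ℝ}

theorem succ_mul_minWindowVariation_le (hβ : IsDegreeOneLift β) (hC : ∀ x, |β x - x| ≤ C)
    (hF : Continuous F) (hβF : Semiconj β F ((n : ℝ) * ·)) {L : ℕ} {p q : ℝ} (hpq : p ≤ q)
    (hqL : q - p + 1 ≤ L) (hn : 3 * C + 2 * L ≤ n * (β p - β q)) (x : ℝ) :
    ((n + 1 : ℕ) : ℝ≥0∞) * minWindowVariation β L ≤ n * eVariationOn β (Icc x (x + L)) := by
  have hL : (0 : ℝ) < L := by linarith
  -- translate the descending pair into the window `[x, x + L]`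
  set k := ⌈x - p⌉
  set p' := p + k
  set q' := q + k
  have hxp' : x ≤ p' := by linarith [Int.le_ceil (x - p)]
  have hp'q' : p' ≤ q' := by linarith
  have hq'x : q' ≤ x + L := by linarith [Int.ceil_lt_add_one (x - p)]
  have hdesc : n * β p' - n * β q' = n * (β p - β q) := by
    rw [hβ.map_add_intCast, hβ.map_add_intCast]; ring
  have hper : n * β (x + L) = n * β x + n * L := by rw [hβ.map_add_natCast]; ring
  -- `F` goes up on `[x, p']`, down on `[p', q']` and up again on `[q', x + L]`
  have hrise : (n + 3) * (L : ℝ) ≤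
      |F p' - F x| + |F q' - F p'| + |F (x + L) - F q'| := by
    have := abs_sub_mul_le_of_semiconj hC hβF
    linarith [abs_le.1 (this x), abs_le.1 (this p'), abs_le.1 (this q'),
      abs_le.1 (this (x + L)), le_abs_self (F p' - F x), neg_abs_le (F q' - F p'),
      le_abs_self (F (x + L) - F q')]
  set W := minWindowVariation β L
  set V : ℝ → ℝ → ℝ≥0∞ := fun a b => eVariationOn (β ∘ F) (Icc a b)
  calc ((n + 1 : ℕ) : ℝ≥0∞) * W
      ≤ ((⌊|F p' - F x| / L⌋₊ + ⌊|F q' - F p'| / L⌋₊ + ⌊|F (x + L) - F q'| / L⌋₊ : ℕ)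
          : ℝ≥0∞) * W :=
        mul_le_mul_left (Nat.cast_le.2 (add_one_le_floor_add_floor_add_floor hL hrise)) _
    _ = (⌊|F p' - F x| / L⌋₊ : ℝ≥0∞) * W + (⌊|F q' - F p'| / L⌋₊ : ℝ≥0∞) * W +
          (⌊|F (x + L) - F q'| / L⌋₊ : ℝ≥0∞) * W := by push_cast; ring
    _ ≤ V x p' + V p' q' + V q' (x + L) := by
        gcongr <;> exact floor_mul_minWindowVariation_le β hL ‹_› hF.continuousOn
    _ = V x (x + L) := by
        simp only [V, eVariationOn_Icc_add_Icc _ hxp' hp'q',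
          eVariationOn_Icc_add_Icc _ (hxp'.trans hp'q') hq'x]
    _ ≤ n * eVariationOn β (Icc x (x + L)) := eVariationOn_comp_le_of_semiconj hβF _

theorem minWindowVariation_eq_top (hβ : IsDegreeOneLift β) (hC : ∀ x, |β x - x| ≤ C)
    (hF : Continuous F) (hβF : Semiconj β F ((n : ℝ) * ·)) {L : ℕ} {p q : ℝ} (hpq : p ≤ q)
    (hqL : q - p + 1 ≤ L) (hn : 3 * C + 2 * L ≤ n * (β p - β q)) :
    minWindowVariation β L = ⊤ := by
  have hW0 : minWindowVariation β L ≠ 0 := by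
    have : (0 : ℝ) < L := by linarith
    exact (hβ.natCast_le_minWindowVariation L).trans_lt' (by exact_mod_cast this) |>.ne'
  have hgrowth :
      ((n + 1 : ℕ) : ℝ≥0∞) * minWindowVariation β L ≤ n * minWindowVariation β L := by
    rw [minWindowVariation, ENNReal.mul_iInf fun h => absurd h (ENNReal.natCast_ne_top n)]
    exact le_iInf (hβ.succ_mul_minWindowVariation_le hC hF hβF hpq hqL hn)
  by_contra hWtop
  have := Nat.cast_le.1 ((ENNReal.mul_le_mul_iff_left hW0 hWtop).1 hgrowth)
  omega

theorem eVariationOn_Icc_eq_top {g : ℝ → ℝ} {d : ℕ} (hβ : IsDegreeOneLift β)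
    (hβc : Continuous β) (hg : Continuous g) (hβg : Semiconj β g ((d : ℝ) * ·)) (hd : 1 < d)
    (hnonconst : ∀ s t, s < t → ∃ z ∈ Icc s t, β z ≠ β s)
    {p q : ℝ} (hpq : p < q) (hβpq : β q < β p) {s t : ℝ} (hst : s < t) :
    eVariationOn β (Icc s t) = ⊤ := by
  obtain ⟨C, hC⟩ := hβ.exists_abs_sub_le hβc
  set L := ⌈q - p⌉₊ + 1
  have hqL : q - p + 1 ≤ L := by push_cast [L]; linarith [Nat.le_ceil (q - p)]
  obtain ⟨N, hN⟩ := exists_lt_natCast_pow_mul hd (sub_pos.2 hβpq) (3 * C + 2 * L)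
  have hW : minWindowVariation β L = ⊤ := hβ.minWindowVariation_eq_top hC (hg.iterate N)
    (semiconj_iterate_natCast_pow hβg N) hpq.le hqL hN.le
  -- some iterate `g^[K]` stretches `[s, z]` over a whole window
  obtain ⟨z, hz, hne⟩ := hnonconst s t hst
  obtain ⟨K, hK⟩ := exists_lt_natCast_pow_mul hd (abs_pos.2 (sub_ne_zero.2 hne)) (L + 2 * C)
  have hlap : ((1 : ℕ) : ℝ) * L ≤ |g^[K] z - g^[K] s| := by
    have hclose := abs_sub_mul_le_of_semiconj hC (semiconj_iterate_natCast_pow hβg K)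
    have hz' := abs_le.1 (hclose z)
    have hs' := abs_le.1 (hclose s)
    rw [Nat.cast_one, one_mul]
    rcases abs_cases (β z - β s) with ⟨habs, -⟩ | ⟨habs, -⟩ <;> rw [habs] at hK
    · exact le_abs.2 (Or.inl (by linarith))
    · exact le_abs.2 (Or.inr (by linarith))
  have hlower := natCast_mul_minWindowVariation_le β (Nat.cast_nonneg L) 1 hz.1
    (hg.iterate K).continuousOn hlap
  rw [hW, Nat.cast_one, one_mul, top_le_iff] at hlower
  have hupper : ⊤ ≤ ((d ^ K : ℕ) : ℝ≥0∞) * eVariationOn β (Icc s t) :=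
    calc ⊤ = eVariationOn (β ∘ g^[K]) (Icc s z) := hlower.symm
      _ ≤ ((d ^ K : ℕ) : ℝ≥0∞) * eVariationOn β (Icc s z) :=
        eVariationOn_comp_le_of_semiconj (semiconj_iterate_natCast_pow hβg K) _
      _ ≤ ((d ^ K : ℕ) : ℝ≥0∞) * eVariationOn β (Icc s t) := by
        gcongr
        exact eVariationOn.mono β (Icc_subset_Icc le_rfl hz.2)
  exact (ENNReal.mul_eq_top.1 (top_le_iff.1 hupper)).elim And.right
    fun h => absurd h.1 (ENNReal.natCast_ne_top _)

end IsDegreeOneLift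

theorem stmt18_general
    (g' : ℝ → ℝ) (hg' : Continuous g')
    (α : AddCircle (1 : ℝ) → AddCircle (1 : ℝ))
    (α' : ℝ → ℝ) (hα' : Continuous α')
    (hαlift : ∀ x : ℝ, α (x : AddCircle (1 : ℝ)) = ((α' x : ℝ) : AddCircle (1 : ℝ)))
    (hαdeg : ∀ x : ℝ, α' (x + 1) = α' x + 1)
    (hsemi' : ∀ x : ℝ, α' (g' x) = 2 * α' x)
    (hlight : ∀ θ : AddCircle (1 : ℝ), IsTotallyDisconnected (α ⁻¹' {θ}))
    (hnotinj : ¬ Function.Injective α) :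
    (∀ s t : ℝ, s < t → ¬ BoundedVariationOn α' (Set.Icc s t)) ∧
    (∃ N : ℕ, 1 ≤ N ∧ ∀ j : ℕ, 1 ≤ j →
      ENNReal.ofReal ((2 ^ N + 2) ^ j / 2 ^ (N * j)) ≤ eVariationOn α' (Set.Icc 0 1)) := by
  have hdeg : IsDegreeOneLift α' := hαdeg
  have hsemi : Semiconj α' g' (((2 : ℕ) : ℝ) * ·) := fun x => by simp [hsemi' x]
  obtain ⟨p, q, hpq, hαpq⟩ := hdeg.exists_lt_map_lt_of_not_injective hαlift hlight hnotinj
  have htop : ∀ s t : ℝ, s < t → eVariationOn α' (Icc s t) = ⊤ := fun _ _ hst =>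
    hdeg.eVariationOn_Icc_eq_top hα' hg' hsemi one_lt_two
      (fun _ _ => exists_mem_Icc_ne_of_isTotallyDisconnected hαlift hlight)
      hpq hαpq hst
  refine ⟨fun s t hst hbv => hbv (htop s t hst), 1, le_rfl, fun j _ => ?_⟩
  rw [htop 0 1 one_pos]
  exact le_top

/-- Unbounded variation: if the semiconjugacy `α` of a degree-two circle map is light
and not injective, then the lift `α̃` has unbounded variation on every nontrivial
compact interval; in particular there is `N ≥ 1` with
`var(α̃,[0,1]) ≥ (2^N+2)^j / 2^(Nj)` for all `j ≥ 1`. -/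
theorem stmt18
    (g : AddCircle (1 : ℝ) → AddCircle (1 : ℝ)) (hg : Continuous g)
    (g' : ℝ → ℝ) (hg' : Continuous g')
    (hglift : ∀ x : ℝ, g (x : AddCircle (1 : ℝ)) = ((g' x : ℝ) : AddCircle (1 : ℝ)))
    (hgdeg : ∀ x : ℝ, g' (x + 1) = g' x + 2)
    (α : AddCircle (1 : ℝ) → AddCircle (1 : ℝ)) (hα : Continuous α)
    (α' : ℝ → ℝ) (hα' : Continuous α')
    (hαlift : ∀ x : ℝ, α (x : AddCircle (1 : ℝ)) = ((α' x : ℝ) : AddCircle (1 : ℝ)))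
    (hαdeg : ∀ x : ℝ, α' (x + 1) = α' x + 1)
    (hsemi : ∀ θ, α (g θ) = α θ + α θ)
    (hsemi' : ∀ x : ℝ, α' (g' x) = 2 * α' x)
    (hlight : ∀ θ : AddCircle (1 : ℝ), IsTotallyDisconnected (α ⁻¹' {θ}))
    (hnotinj : ¬ Function.Injective α) :
    (∀ s t : ℝ, s < t → ¬ BoundedVariationOn α' (Set.Icc s t)) ∧
    (∃ N : ℕ, 1 ≤ N ∧ ∀ j : ℕ, 1 ≤ j →
      ENNReal.ofReal ((2 ^ N + 2) ^ j / 2 ^ (N * j)) ≤ eVariationOn α' (Set.Icc 0 1)) :=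
  stmt18_general g' hg' α α' hα' hαlift hαdeg hsemi' hlight hnotinj
end

section
/- For a continuous degree-two circle map g with light semiconjugacy α to angle doubling, the following are equivalent: (a) the lift g̃ is not injective; (b) α is not injective. Moreover, if α is injective then g is topologically conjugate to d and h_top(g) = log 2. -/
/-!
Lifting the semiconjugacy gives `α̃ ∘ g̃ = 2 α̃ + c` for a constant `c` (the difference of the two
sides is continuous and integer-valued). If `g̃` is injective it is increasing, and for `x ≤ y`
iterating the relation gives `2ⁿ (α̃ x - α̃ y) = α̃ (g̃ⁿ x) - α̃ (g̃ⁿ y)`, which is bounded above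
because `α̃ - id` is periodic; so `α̃` is nondecreasing. A flat piece of `α̃` would put an arc
inside a fibre of `α`, so lightness makes `α̃` strictly increasing, and then `α` is injective.
Conversely, the relation transports injectivity of `α̃` to `g̃`.

An injective `α` is a homeomorphism conjugating `g` to the doubling map, and cover entropy is a
conjugacy invariant. The doubling map is `2`-Lipschitz, so about `2ⁿ / ε` equally spaced points
form an `(n, ε)`-cover; and it doubles distances below `1/4`, so `2ⁿ` equally spaced points form an
`(n, 1/4)`-net. Both counts grow like `2ⁿ`, whence the entropy is `log 2`.
-/

open Dynamics Function Filter Set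
open scoped ENNReal NNReal

local notation "𝕋" => AddCircle (1 : ℝ)

namespace Dynamics

variable {X : Type*}

theorem isDynCoverOf_of_lipschitzWith [PseudoMetricSpace X] {T : X → X} {K : ℝ≥0}
    (hT : LipschitzWith K T) (hK : 1 ≤ K) {n : ℕ} {δ ε : ℝ} (hδε : K ^ n * δ ≤ ε) {s : Set X}
    (hs : ∀ x, ∃ y ∈ s, dist x y < δ) : IsDynCoverOf T univ {p | dist p.1 p.2 < ε} n s := by
  intro x _
  obtain ⟨y, hy, hxy⟩ := hs x
  refine ⟨y, hy, mem_dynEntourage.2 fun i hi => ?_⟩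
  calc dist (T^[i] x) (T^[i] y) ≤ K ^ i * dist x y := by
        simpa using (hT.iterate i).dist_le_mul x y
    _ < K ^ i * δ := by gcongr
    _ ≤ K ^ n * δ := by
        gcongr
        exact dist_nonneg.trans hxy.le
    _ ≤ ε := hδε

theorem isDynNetIn_of_dist_lt [PseudoMetricSpace X] {T : X → X} {U : SetRel X X} {n : ℕ} {r : ℝ}
    (hU : ∀ x y, (x, y) ∈ dynEntourage T U n → dist x y < r) {s : Set X}
    (hs : s.Pairwise fun x y => 2 * r ≤ dist x y) : IsDynNetIn T univ U n s := by
  refine ⟨subset_univ s, fun x hx y hy hxy => disjoint_left.2 fun z hzx hzy => ?_⟩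
  linarith [hs hx hy hxy, hU x z hzx, hU y z hzy, dist_triangle_right x y z]

theorem coverEntropy_univ_eq_of_semiconj {Y : Type*} [UniformSpace X] [UniformSpace Y]
    [CompactSpace X] [CompactSpace Y] {S : X → X} {T : Y → Y} (e : X ≃ₜ Y)
    (h : Semiconj e S T) : coverEntropy T univ = coverEntropy S univ := by
  apply le_antisymm
  · simpa only [image_univ, e.surjective.range_eq] using
      coverEntropy_image_le_of_uniformContinuous h
        (CompactSpace.uniformContinuous_of_continuous e.continuous) univ
  · simpa only [image_univ, e.symm.surjective.range_eq] using
      coverEntropy_image_le_of_uniformContinuous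
        (h.inverse_left e.symm_apply_apply e.apply_symm_apply)
        (CompactSpace.uniformContinuous_of_continuous e.symm.continuous) univ

end Dynamics

theorem Continuous.strictMono_of_injective_of_lt {G : ℝ → ℝ} (hG : Continuous G)
    (hinj : Injective G) {a b : ℝ} (hab : a < b) (hGab : G a < G b) : StrictMono G :=
  (hG.strictMono_of_inj hinj).resolve_right fun hanti => (hanti hab).not_gt hGab

theorem monotone_of_sub_comp_eq_mul_sub {a G : ℝ → ℝ} {k C : ℝ} (hk : 1 < k) (hG : Monotone G)
    (hexp : ∀ x y, a (G x) - a (G y) = k * (a x - a y))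
    (hC : ∀ u v, u ≤ v → a u - a v ≤ C) : Monotone a := by
  intro x y hxy
  by_contra! hlt
  have hpow : ∀ n : ℕ, a (G^[n] x) - a (G^[n] y) = k ^ n * (a x - a y) := by
    intro n
    induction n with
    | zero => simp
    | succ n ih => rw [iterate_succ_apply', iterate_succ_apply', hexp, ih, pow_succ]; ring
  obtain ⟨n, hn⟩ := pow_unbounded_of_one_lt (C / (a x - a y)) hk
  rw [div_lt_iff₀ (sub_pos.2 hlt)] at hn
  linarith [hpow n, hC _ _ (hG.iterate n hxy)]

namespace AddCircle

theorem coe_eq_coe_iff_exists_int_s19 {x y : ℝ} : (x : 𝕋) = y ↔ ∃ n : ℤ, y = x + n := by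
  rw [QuotientAddGroup.eq, AddSubgroup.mem_zmultiples_iff]
  simp only [zsmul_eq_mul, mul_one]
  exact exists_congr fun n => by constructor <;> intro h <;> linarith

theorem dist_coe_coe_le (x y : ℝ) : dist (x : 𝕋) y ≤ |x - y| := by
  rw [dist_eq_norm, ← coe_sub]
  exact QuotientAddGroup.norm_mk_le_norm

theorem norm_add_self_of_norm_lt {z : 𝕋} (hz : ‖z‖ < 1 / 4) : ‖z + z‖ = 2 * ‖z‖ := by
  obtain ⟨t, rfl⟩ := QuotientAddGroup.mk_surjective z
  set u := t - round t
  have hzu : ((t : ℝ) : 𝕋) = (u : 𝕋) :=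
    coe_eq_coe_iff_exists_int_s19.2 ⟨-round t, by simp only [u]; push_cast; ring⟩
  have hnorm : ‖((t : ℝ) : 𝕋)‖ = |u| := by simp [u, norm_eq]
  rw [hnorm] at hz
  have h2u : |u + u| ≤ |(1 : ℝ)| / 2 := by
    rw [← two_mul, abs_mul, abs_two, abs_one]; linarith
  rw [hnorm, hzu, ← coe_add, (norm_coe_eq_abs_iff (p := 1) one_ne_zero).2 h2u, ← two_mul,
    abs_mul, abs_two]

noncomputable def grid (N : ℕ) : Finset 𝕋 :=
  (Finset.range N).image fun k : ℕ => ((k / N : ℝ) : 𝕋)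

theorem card_grid (N : ℕ) : (grid N).card = N := by
  rw [grid, Finset.card_image_of_injOn, Finset.card_range]
  intro j hj k hk hjk
  simp only [Finset.coe_range, mem_Iio] at hj hk
  have hN : (0 : ℝ) < N := by exact_mod_cast (Nat.zero_le j).trans_lt hj
  have mem : ∀ i < N, (i / N : ℝ) ∈ Ico 0 (0 + 1) := fun i hi =>
    ⟨by positivity, by rw [zero_add, div_lt_one hN]; exact_mod_cast hi⟩
  have := (coe_eq_coe_iff_of_mem_Ico (mem j hj) (mem k hk)).1 hjk
  exact_mod_cast (div_left_inj' hN.ne').1 this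

theorem exists_mem_grid_dist_lt {N : ℕ} (hN : 0 < N) (θ : 𝕋) :
    ∃ y ∈ grid N, dist θ y < 1 / N := by
  obtain ⟨t, rfl⟩ := QuotientAddGroup.mk_surjective θ
  have hN' : (0 : ℝ) < N := by exact_mod_cast hN
  set s := Int.fract t
  have hts : ((t : ℝ) : 𝕋) = (s : 𝕋) :=
    (coe_eq_coe_iff_exists_int_s19.2 ⟨⌊t⌋, (Int.fract_add_floor t).symm⟩).symm
  set k := ⌊s * N⌋₊
  have hk : (k : ℝ) ≤ s * N := Nat.floor_le (by positivity)
  have hk' : s * N < k + 1 := Nat.lt_floor_add_one _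
  have hkN : k < N := by
    have : s * N < N := by nlinarith [Int.fract_lt_one t]
    exact_mod_cast hk.trans_lt this
  refine ⟨_, Finset.mem_image_of_mem _ (Finset.mem_range.2 hkN), ?_⟩
  rw [hts]
  refine (dist_coe_coe_le _ _).trans_lt ?_
  rw [show s - k / N = (s * N - k) / N by field_simp, abs_div, abs_of_pos hN',
    div_lt_div_iff_of_pos_right hN', abs_lt]
  constructor <;> linarith

theorem grid_pairwise_le_dist (N : ℕ) :
    (grid N : Set 𝕋).Pairwise fun x y => 1 / N ≤ dist x y := by
  simp only [grid, Finset.coe_image, Finset.coe_range]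
  rintro _ ⟨j, hj, rfl⟩ _ ⟨k, hk, rfl⟩ hjk
  simp only [mem_Iio] at hj hk
  have hN : (0 : ℝ) < N := by exact_mod_cast (Nat.zero_le j).trans_lt hj
  set r := round ((j - k : ℝ) / N)
  have hint : ((j : ℤ) - k - r * N : ℤ) ≠ 0 := by
    intro h0
    have : |(j : ℤ) - k| < N := by rw [abs_lt]; omega
    rw [show (j : ℤ) - k = r * N by linarith, abs_mul, Nat.abs_cast] at this
    have hr : r = 0 := Int.abs_lt_one_iff.1 <| by nlinarith
    have : j = k := by rw [hr] at h0; omega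
    exact hjk (this ▸ rfl)
  have hdist : dist ((j / N : ℝ) : 𝕋) ((k / N : ℝ) : 𝕋) = |((j - k - r * N : ℤ) : ℝ)| / N := by
    rw [dist_eq_norm, ← coe_sub, norm_eq]
    push_cast
    rw [inv_one, one_mul, mul_one, ← sub_div, ← abs_of_pos hN, ← abs_div, abs_of_pos hN]
    congr 1
    field_simp
    rfl
  rw [hdist]
  gcongr
  exact_mod_cast Int.one_le_abs hint

noncomputable def doubling (θ : 𝕋) : 𝕋 := θ + θ

theorem lipschitzWith_doubling : LipschitzWith 2 doubling := by
  have := LipschitzWith.id.add (LipschitzWith.id (α := 𝕋))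
  rwa [one_add_one_eq_two] at this

theorem dist_lt_of_mem_dynEntourage_doubling {x y : 𝕋} {n : ℕ}
    (h : (x, y) ∈ dynEntourage doubling {p | dist p.1 p.2 < 1 / 4} (n + 1)) :
    2 ^ n * dist x y < 1 / 4 := by
  rw [mem_dynEntourage] at h
  have expand : ∀ i ≤ n, dist (doubling^[i] x) (doubling^[i] y) = 2 ^ i * dist x y := by
    intro i hi
    induction i with
    | zero => simp
    | succ i ih =>
      have hlt : ‖doubling^[i] x - doubling^[i] y‖ < 1 / 4 := by
        simpa [dist_eq_norm] using h i (by omega)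
      rw [iterate_succ_apply', iterate_succ_apply', doubling, doubling, dist_eq_norm,
        add_sub_add_comm, norm_add_self_of_norm_lt hlt, ← dist_eq_norm, ih (by omega), pow_succ]
      ring
  simpa [expand n le_rfl] using h n (by omega)

theorem coverMincard_doubling_le {ε : ℝ} (hε : 0 < ε) (n : ℕ) :
    coverMincard doubling univ {p | dist p.1 p.2 < ε} n ≤ ⌈1 / ε⌉₊ * 2 ^ n := by
  set N := ⌈1 / ε⌉₊ * 2 ^ n
  have hN : 0 < N := by positivity
  have hcover : IsDynCoverOf doubling univ {p | dist p.1 p.2 < ε} n (grid N) := by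
    refine isDynCoverOf_of_lipschitzWith lipschitzWith_doubling one_le_two ?_
      (exists_mem_grid_dist_lt hN)
    have hceil : 1 / ε ≤ ⌈1 / ε⌉₊ := Nat.le_ceil _
    have hc : (0 : ℝ) < ⌈1 / ε⌉₊ := by positivity
    simp only [N]
    push_cast
    rw [show (2 : ℝ) ^ n * (1 / (⌈1 / ε⌉₊ * 2 ^ n)) = 1 / ⌈1 / ε⌉₊ by field_simp]
    exact (one_div_le hc hε).2 hceil
  calc coverMincard doubling univ {p | dist p.1 p.2 < ε} n ≤ (grid N).card :=
        hcover.coverMincard_le_card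
    _ = N := by rw [card_grid]
    _ = ⌈1 / ε⌉₊ * 2 ^ n := by simp only [N]; push_cast; rfl

theorem le_netMaxcard_doubling (n : ℕ) :
    2 ^ (n + 1) ≤ netMaxcard doubling univ {p : 𝕋 × 𝕋 | dist p.1 p.2 < 1 / 4} (n + 1) := by
  have hnet : IsDynNetIn doubling univ {p : 𝕋 × 𝕋 | dist p.1 p.2 < 1 / 4} (n + 1)
      (grid (2 ^ (n + 1))) := by
    refine isDynNetIn_of_dist_lt (r := 1 / 2 ^ (n + 2)) (fun x y h => ?_) ?_
    · have := dist_lt_of_mem_dynEntourage_doubling h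
      rw [lt_div_iff₀ (by positivity)]
      calc dist x y * 2 ^ (n + 2) = 4 * (2 ^ n * dist x y) := by ring
        _ < 1 := by linarith
    · refine (grid_pairwise_le_dist _).mono' fun x y h => le_of_eq_of_le ?_ h
      push_cast
      ring
  simpa [card_grid] using hnet.card_le_netMaxcard

theorem coverEntropy_doubling : coverEntropy doubling univ = Real.log 2 := by
  have hlog2 : ENNReal.log 2 = Real.log 2 := by
    simpa using ENNReal.log_ofReal_of_pos two_pos
  rw [← hlog2, ← ExpGrowth.expGrowthSup_pow]
  apply le_antisymm
  · rw [coverEntropy_eq_iSup_basis Metric.uniformity_basis_dist]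
    refine iSup₂_le fun ε hε => ?_
    refine ExpGrowth.expGrowthSup_le_of_eventually_le (b := ⌈1 / ε⌉₊) (ENNReal.natCast_ne_top _)
      (Eventually.of_forall fun n => ?_)
    exact_mod_cast ENat.toENNReal_mono (coverMincard_doubling_le hε n)
  · have hU : {p : 𝕋 × 𝕋 | dist p.1 p.2 < 1 / 4} ∈ uniformity 𝕋 :=
      Metric.dist_mem_uniformity (by norm_num)
    refine le_trans ?_ (netEntropyEntourage_le_coverEntropy doubling univ hU)
    refine ExpGrowth.expGrowthSup_eventually_monotone (eventually_atTop.2 ⟨1, fun n hn => ?_⟩)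
    obtain ⟨m, rfl⟩ := Nat.exists_eq_add_of_le' hn
    simpa using ENat.toENNReal_mono (le_netMaxcard_doubling m)

section Lift

variable {f : 𝕋 → 𝕋} {F : ℝ → ℝ}

theorem periodic_lift_sub (hdeg : ∀ x, F (x + 1) = F x + 1) : Periodic (fun x => F x - x) 1 :=
  fun x => by simp only [hdeg]; ring

theorem lift_add_intCast (hdeg : ∀ x, F (x + 1) = F x + 1) (x : ℝ) (n : ℤ) :
    F (x + n) = F x + n := by
  have := (periodic_lift_sub hdeg).int_mul n x
  simp only [mul_one] at this
  linarith

theorem exists_abs_lift_sub_le (hF : Continuous F) (hdeg : ∀ x, F (x + 1) = F x + 1) :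
    ∃ B, ∀ x, |F x - x| ≤ B := by
  obtain ⟨B, hB⟩ := isBounded_iff_forall_norm_le.1 <|
    (periodic_lift_sub hdeg).isBounded_of_continuous one_ne_zero (hF.sub continuous_id)
  exact ⟨B, fun x => hB _ (mem_range_self x)⟩

theorem injective_iff_injective_lift (hlift : ∀ x : ℝ, f x = F x)
    (hdeg : ∀ x, F (x + 1) = F x + 1) : Injective f ↔ Injective F := by
  constructor
  · intro hf x y hxy
    have hfxy : f x = f y := by rw [hlift, hlift, hxy]
    obtain ⟨n, rfl⟩ := coe_eq_coe_iff_exists_int_s19.1 (hf hfxy)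
    rw [lift_add_intCast hdeg] at hxy
    simp [show (n : ℝ) = 0 by linarith]
  · intro hF θ₁ θ₂ h
    obtain ⟨x, rfl⟩ := QuotientAddGroup.mk_surjective θ₁
    obtain ⟨y, rfl⟩ := QuotientAddGroup.mk_surjective θ₂
    rw [hlift, hlift, coe_eq_coe_iff_exists_int_s19] at h
    obtain ⟨n, hn⟩ := h
    have hxy : F (y + (-n : ℤ)) = F x := by rw [lift_add_intCast hdeg]; push_cast; linarith
    exact coe_eq_coe_iff_exists_int_s19.2 ⟨n, by rw [← hF hxy]; push_cast; ring⟩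

theorem surjective_of_lift_s19 (hlift : ∀ x : ℝ, f x = F x) (hF : Continuous F)
    (hdeg : ∀ x, F (x + 1) = F x + 1) : Surjective f := by
  obtain ⟨B, hB⟩ := exists_abs_lift_sub_le hF hdeg
  have hFsurj : Surjective F := hF.surjective
    (by simpa using tendsto_atTop_add_left_of_le _ (-B) (fun x => (abs_le.1 (hB x)).1) tendsto_id)
    (by simpa using tendsto_atBot_add_left_of_ge _ B (fun x => (abs_le.1 (hB x)).2) tendsto_id)
  intro θ
  obtain ⟨t, rfl⟩ := QuotientAddGroup.mk_surjective θ
  obtain ⟨x, rfl⟩ := hFsurj t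
  exact ⟨x, hlift x⟩

theorem strictMono_lift_of_isTotallyDisconnected (hlift : ∀ x : ℝ, f x = F x)
    (hmono : Monotone F) (hlight : ∀ θ, IsTotallyDisconnected (f ⁻¹' {θ})) : StrictMono F := by
  intro a b hab
  refine (hmono hab.le).lt_of_ne fun heq => ?_
  set b' := min b (a + 1 / 2)
  have hab' : a < b' := lt_min hab (by linarith)
  have hfiber : ((↑) : ℝ → 𝕋) '' Icc a b' ⊆ f ⁻¹' {f a} := by
    rintro _ ⟨t, ht, rfl⟩
    have hFt : F t = F a :=
      le_antisymm (heq ▸ hmono (ht.2.trans (min_le_left _ _))) (hmono ht.1)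
    rw [mem_preimage, mem_singleton_iff, hlift, hlift, hFt]
  have hsub := hlight (f a) _ hfiber
    (isPreconnected_Icc.image _ (AddCircle.continuous_mk' 1).continuousOn)
  have := (coe_eq_coe_iff_of_mem_Ico (p := (1 : ℝ)) (a := a) ⟨le_rfl, by linarith⟩
    ⟨hab'.le, by linarith [min_le_right b (a + 1 / 2)]⟩).1
    (hsub (mem_image_of_mem _ (left_mem_Icc.2 hab'.le))
      (mem_image_of_mem _ (right_mem_Icc.2 hab'.le)))
  exact hab'.ne this

end Lift

theorem exists_lift_comp_eq_two_mul_add {g α : 𝕋 → 𝕋} {g' α' : ℝ → ℝ} (hg' : Continuous g')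
    (hα' : Continuous α') (hglift : ∀ x : ℝ, g x = g' x) (hαlift : ∀ x : ℝ, α x = α' x)
    (hsemi : ∀ θ, α (g θ) = α θ + α θ) : ∃ c, ∀ x, α' (g' x) = 2 * α' x + c := by
  have hint : ∀ x, α' (g' x) - 2 * α' x ∈ range ((↑) : ℤ → ℝ) := by
    intro x
    have h := hsemi x
    rw [hglift, hαlift, hαlift, ← coe_add, eq_comm, coe_eq_coe_iff_exists_int_s19] at h
    obtain ⟨n, hn⟩ := h
    exact ⟨n, by linarith⟩
  refine ⟨α' (g' 0) - 2 * α' 0, fun x => ?_⟩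
  have := isPreconnected_univ.constant_of_mapsTo
    Int.isClosedEmbedding_coe_real.isInducing.isDiscrete_range
    (by fun_prop : Continuous fun x => α' (g' x) - 2 * α' x).continuousOn (fun x _ => hint x)
    (mem_univ x) (mem_univ 0)
  linarith

theorem monotone_lift_of_semiconj {g' α' : ℝ → ℝ} {c : ℝ} (hα' : Continuous α')
    (hαdeg : ∀ x, α' (x + 1) = α' x + 1) (hg' : Monotone g')
    (hc : ∀ x, α' (g' x) = 2 * α' x + c) : Monotone α' := by
  obtain ⟨B, hB⟩ := exists_abs_lift_sub_le hα' hαdeg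
  refine monotone_of_sub_comp_eq_mul_sub (C := 2 * B) one_lt_two hg'
    (fun x y => by rw [hc, hc]; ring) fun u v _ => ?_
  linarith [abs_le.1 (hB u), abs_le.1 (hB v)]

end AddCircle

open AddCircle

theorem stmt19_general
    (g : AddCircle (1 : ℝ) → AddCircle (1 : ℝ))
    (g' : ℝ → ℝ) (hg' : Continuous g')
    (hglift : ∀ x : ℝ, g (x : AddCircle (1 : ℝ)) = ((g' x : ℝ) : AddCircle (1 : ℝ)))
    (hgdeg : ∀ x : ℝ, g' (x + 1) = g' x + 2)
    (α : AddCircle (1 : ℝ) → AddCircle (1 : ℝ)) (hα : Continuous α)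
    (α' : ℝ → ℝ) (hα' : Continuous α')
    (hαlift : ∀ x : ℝ, α (x : AddCircle (1 : ℝ)) = ((α' x : ℝ) : AddCircle (1 : ℝ)))
    (hαdeg : ∀ x : ℝ, α' (x + 1) = α' x + 1)
    (hsemi : ∀ θ, α (g θ) = α θ + α θ)
    (hlight : ∀ θ : AddCircle (1 : ℝ), IsTotallyDisconnected (α ⁻¹' {θ})) :
    (¬ Function.Injective g' ↔ ¬ Function.Injective α) ∧
    (Function.Injective α →
      (∃ h : AddCircle (1 : ℝ) ≃ₜ AddCircle (1 : ℝ), ∀ θ, h (g θ) = h θ + h θ) ∧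
      Dynamics.coverEntropy g Set.univ = (Real.log 2 : EReal)) := by
  obtain ⟨c, hc⟩ := exists_lift_comp_eq_two_mul_add hg' hα' hglift hαlift hsemi
  have hinj : Injective g' ↔ Injective α := by
    rw [injective_iff_injective_lift hαlift hαdeg]
    refine ⟨fun hg'inj => ?_, fun hα'inj x y hxy => hα'inj ?_⟩
    · have hg'mono : StrictMono g' :=
        hg'.strictMono_of_injective_of_lt hg'inj (lt_add_one 0) (by rw [hgdeg]; linarith)
      exact (strictMono_lift_of_isTotallyDisconnected hαlift
        (monotone_lift_of_semiconj hα' hαdeg hg'mono.monotone hc) hlight).injective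
    · linarith [hc x, hc y, congrArg α' hxy]
  refine ⟨not_congr hinj, fun hαinj => ?_⟩
  let h : 𝕋 ≃ₜ 𝕋 := hα.homeoOfEquivCompactToT2
    (f := Equiv.ofBijective α ⟨hαinj, surjective_of_lift_s19 hαlift hα' hαdeg⟩)
  exact ⟨⟨h, hsemi⟩, by
    rw [← coverEntropy_univ_eq_of_semiconj (T := doubling) h hsemi, coverEntropy_doubling]⟩

/-- For a degree-two circle map `g` with light semiconjugacy `α`: the lift `g̃` is not
injective iff `α` is not injective; and if `α` is injective then `g` is topologically
conjugate to the doubling map and `h_top(g) = log 2`. -/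
theorem stmt19
    (g : AddCircle (1 : ℝ) → AddCircle (1 : ℝ)) (hg : Continuous g)
    (g' : ℝ → ℝ) (hg' : Continuous g')
    (hglift : ∀ x : ℝ, g (x : AddCircle (1 : ℝ)) = ((g' x : ℝ) : AddCircle (1 : ℝ)))
    (hgdeg : ∀ x : ℝ, g' (x + 1) = g' x + 2)
    (α : AddCircle (1 : ℝ) → AddCircle (1 : ℝ)) (hα : Continuous α)
    (α' : ℝ → ℝ) (hα' : Continuous α')
    (hαlift : ∀ x : ℝ, α (x : AddCircle (1 : ℝ)) = ((α' x : ℝ) : AddCircle (1 : ℝ)))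
    (hαdeg : ∀ x : ℝ, α' (x + 1) = α' x + 1)
    (hsemi : ∀ θ, α (g θ) = α θ + α θ)
    (hlight : ∀ θ : AddCircle (1 : ℝ), IsTotallyDisconnected (α ⁻¹' {θ})) :
    (¬ Function.Injective g' ↔ ¬ Function.Injective α) ∧
    (Function.Injective α →
      (∃ h : AddCircle (1 : ℝ) ≃ₜ AddCircle (1 : ℝ), ∀ θ, h (g θ) = h θ + h θ) ∧
      Dynamics.coverEntropy g Set.univ = (Real.log 2 : EReal)) :=
  stmt19_general g g' hg' hglift hgdeg α hα α' hα' hαlift hαdeg hsemi hlight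
end
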